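/- arXiv:1711.00195 — 6 statements merged into one kernel-verified Lean document; each statement's English description precedes it below -/
import Mathlib

section
/- Let m ∈ ℝ. The tortoise-coordinate function r_*(r) = r + 2m·log(r − 2m) is defined and strictly increasing on the interval (max(2m,0), ∞) and tends to +∞ as r → ∞. Consequently there is R₀ > 0 such that for every ρ > R₀ there is a unique F(ρ) ∈ (max(2m,0), ∞) with r_*(F(ρ)) = ρ, and the inverse function satisfies the asymptotics F(ρ) = ρ − 2m·log ρ + O(ρ⁻¹ log ρ) as ρ → ∞; that is, there exist C > 0 and ρ₁ > R₀ such that |F(ρ) − ρ + 2m·log ρ| ≤ C·ρ⁻¹·log ρ for all ρ ≥ ρ₁. -/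
/-!
`r_*` has derivative `r / (r - 2m) > 0`, and `2m log s = o(s)`, so `r_*` increases to `+∞` and
is inverted on `[r₀, ∞)` by the intermediate value theorem. With `s = F ρ - 2m` the equation
`r_*(F ρ) = ρ` reads `s + 2m log s + 2m = ρ`, so `s = ρ + O(log ρ)`, and then
`F ρ - ρ + 2m log ρ = 2m (log ρ - log s) = O(|ρ - s| / ρ) = O(ρ⁻¹ log ρ)`.
-/

open Set Filter Real

lemma Real.abs_log_sub_log_le {x y c : ℝ} (hc : 0 < c) (hx : c ≤ x) (hy : c ≤ y) :
    |log x - log y| ≤ |x - y| / c := by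
  wlog hyx : y ≤ x generalizing x y
  · rw [abs_sub_comm, abs_sub_comm x]
    exact this hy hx (le_of_not_ge hyx)
  have hx0 : 0 < x := hc.trans_le hx
  have hy0 : 0 < y := hc.trans_le hy
  rw [abs_of_nonneg (sub_nonneg.2 (log_le_log hy0 hyx)), abs_of_nonneg (sub_nonneg.2 hyx),
    ← log_div hx0.ne' hy0.ne']
  calc log (x / y) ≤ x / y - 1 := log_le_sub_one_of_pos (div_pos hx0 hy0)
    _ = (x - y) / y := by field_simp
    _ ≤ (x - y) / c := by gcongr

lemma eventually_abs_mul_log_le_half (c : ℝ) : ∀ᶠ s in atTop, |c * log s| ≤ s / 2 := by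
  filter_upwards [(isLittleO_log_id_atTop.const_mul_left c).def (by norm_num : (0 : ℝ) < 1 / 2),
    eventually_ge_atTop 0] with s hs hs0
  simpa [abs_of_nonneg hs0, div_eq_inv_mul] using hs

/-- Here `s` is within `O(|c| log ρ)` of `ρ`, and `log` is `2 / ρ`-Lipschitz above `ρ / 2`. -/
lemma abs_mul_log_sub_log_le {c s ρ : ℝ} (hs : 1 ≤ s) (hsmall : |c * log s| ≤ s / 2)
    (hρ : 4 * |c| + 3 ≤ ρ) (heq : s + c * log s + c = ρ) :
    |c * (log ρ - log s)| ≤ 6 * c ^ 2 * ρ⁻¹ * log ρ := by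
  have hc0 := abs_nonneg c
  have hc_lower := neg_abs_le c
  have hc_upper := le_abs_self c
  have hlogρ : 1 ≤ log ρ := by
    rw [le_log_iff_exp_le (by linarith)]
    linarith [exp_one_lt_three]
  have hlogs : 0 ≤ log s := log_nonneg hs
  have hcL := abs_le.mp hsmall
  have hs_lower : ρ / 2 ≤ s := by linarith
  have hs_upper : s ≤ ρ ^ 2 := by nlinarith
  have hlogs_le : log s ≤ 2 * log ρ := by
    simpa using log_le_log (by linarith) hs_upper
  have hdist : |ρ - s| ≤ 3 * |c| * log ρ := by
    calc |ρ - s| = |c| * (1 + log s) := by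
          rw [← heq, ← abs_of_nonneg (by linarith : 0 ≤ 1 + log s), ← abs_mul]; ring_nf
      _ ≤ 3 * |c| * log ρ := by nlinarith
  calc |c * (log ρ - log s)| = |c| * |log ρ - log s| := abs_mul _ _
    _ ≤ |c| * (3 * |c| * log ρ / (ρ / 2)) := by
        gcongr
        exact (abs_log_sub_log_le (by linarith) (by linarith) hs_lower).trans (by gcongr; linarith)
    _ = 6 * c ^ 2 * ρ⁻¹ * log ρ := by
        field_simp
        rw [← sq_abs c]; ring

noncomputable def tortoise (m r : ℝ) : ℝ := r + 2 * m * log (r - 2 * m)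

lemma hasDerivAt_tortoise {m r : ℝ} (hr : 2 * m < r) :
    HasDerivAt (tortoise m) (r / (r - 2 * m)) r := by
  have hr' : r - 2 * m ≠ 0 := (sub_pos.2 hr).ne'
  have h : HasDerivAt (tortoise m) (1 + 2 * m * (1 / (r - 2 * m))) r :=
    (hasDerivAt_id' r).add ((((hasDerivAt_id' r).sub_const _).log hr').const_mul _)
  convert h using 1
  field_simp
  ring

lemma continuousOn_tortoise (m : ℝ) : ContinuousOn (tortoise m) (Ioi (2 * m)) :=
  fun _ hr => (hasDerivAt_tortoise hr).continuousAt.continuousWithinAt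

lemma strictMonoOn_tortoise (m : ℝ) : StrictMonoOn (tortoise m) (Ioi (max (2 * m) 0)) := by
  refine strictMonoOn_of_deriv_pos (convex_Ioi _)
    ((continuousOn_tortoise m).mono (Ioi_subset_Ioi (le_max_left _ _))) fun r hr => ?_
  rw [interior_Ioi, mem_Ioi, max_lt_iff] at hr
  rw [(hasDerivAt_tortoise hr.1).deriv]
  exact div_pos hr.2 (sub_pos.2 hr.1)

lemma tendsto_tortoise_atTop (m : ℝ) : Tendsto (tortoise m) atTop atTop := by
  obtain ⟨s₀, hs₀⟩ := eventually_atTop.1 (eventually_abs_mul_log_le_half (2 * m))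
  refine tendsto_atTop_mono' _ ?_
    (tendsto_atTop_add_const_right _ m (tendsto_id.atTop_div_const two_pos))
  filter_upwards [eventually_ge_atTop (s₀ + 2 * m)] with r hr
  have := (abs_le.1 (hs₀ (r - 2 * m) (by linarith))).1
  simp only [tortoise, id]
  linarith

lemma tortoise_surjOn {m r₀ : ℝ} (hr₀ : 2 * m < r₀) :
    SurjOn (tortoise m) (Ici r₀) (Ici (tortoise m r₀)) :=
  intermediate_value_Ici ((continuousOn_tortoise m).mono (Ici_subset_Ioi.2 hr₀))
    (tendsto_tortoise_atTop m)

/-- For the mass-`m` Schwarzschild metric, the tortoise coordinate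
`r_*(r) = r + 2 m log (r - 2 m)` is strictly increasing on `(max(2m,0), ∞)` and tends to `+∞`;
consequently there is `R₀ > 0` such that for every `ρ > R₀` there is a unique
`F ρ ∈ (max(2m,0), ∞)` with `r_*(F ρ) = ρ`, and the inverse satisfies
`F ρ = ρ - 2 m log ρ + O(ρ⁻¹ log ρ)` as `ρ → ∞`. -/
theorem tortoise_inverse_asymptotics (m : ℝ) :
    StrictMonoOn (fun r : ℝ => r + 2 * m * Real.log (r - 2 * m)) (Ioi (max (2 * m) 0)) ∧
    Tendsto (fun r : ℝ => r + 2 * m * Real.log (r - 2 * m)) atTop atTop ∧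
    ∃ R₀ : ℝ, 0 < R₀ ∧ ∃ F : ℝ → ℝ,
      (∀ ρ : ℝ, R₀ < ρ →
        F ρ ∈ Ioi (max (2 * m) 0) ∧
        F ρ + 2 * m * Real.log (F ρ - 2 * m) = ρ ∧
        ∀ r ∈ Ioi (max (2 * m) 0), r + 2 * m * Real.log (r - 2 * m) = ρ → r = F ρ) ∧
      ∃ C : ℝ, 0 < C ∧ ∃ ρ₁ : ℝ, R₀ < ρ₁ ∧ ∀ ρ : ℝ, ρ₁ ≤ ρ →
        |F ρ - ρ + 2 * m * Real.log ρ| ≤ C * ρ⁻¹ * Real.log ρ := by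
  set a := max (2 * m) 0
  have hmono := strictMonoOn_tortoise m
  obtain ⟨s₀, hs₀⟩ := eventually_atTop.1
    ((eventually_abs_mul_log_le_half (2 * m)).and (eventually_ge_atTop 1))
  -- For `r ≥ r₀` we have `r > a` and `|2 m log (r - 2 m)| ≤ (r - 2 m) / 2`.
  set r₀ := max (a + 1) (s₀ + 2 * m)
  have hr₀ : a < r₀ := (lt_add_one a).trans_le (le_max_left _ _)
  set R₀ := max (tortoise m r₀) 1
  set F := Function.invFunOn (tortoise m) (Ioi a)
  have hF : ∀ ρ, R₀ < ρ → F ρ ∈ Ioi a ∧ F ρ + 2 * m * log (F ρ - 2 * m) = ρ ∧ r₀ ≤ F ρ := by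
    intro ρ hρ
    obtain ⟨r, hr, rfl⟩ :=
      tortoise_surjOn ((le_max_left _ _).trans_lt hr₀) ((le_max_left _ _).trans hρ.le)
    have hra : r ∈ Ioi a := hr₀.trans_le hr
    obtain ⟨hFa, hFr⟩ := Function.invFunOn_pos ⟨r, hra, rfl⟩
    exact ⟨hFa, hFr, hr.trans_eq (hmono.injOn hra hFa hFr.symm)⟩
  refine ⟨hmono, tendsto_tortoise_atTop m, R₀, by positivity, F, fun ρ hρ => ?_,
    6 * (2 * m) ^ 2 + 1, by positivity, max (R₀ + 1) (4 * |2 * m| + 3),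
    (lt_add_one R₀).trans_le (le_max_left _ _), fun ρ hρ => ?_⟩
  · obtain ⟨hFa, hFρ, -⟩ := hF ρ hρ
    exact ⟨hFa, hFρ, fun r hr hrρ => hmono.injOn hr hFa (hrρ.trans hFρ.symm)⟩
  · obtain ⟨-, hFρ, hr₀F⟩ := hF ρ ((lt_add_one R₀).trans_le ((le_max_left _ _).trans hρ))
    obtain ⟨hsmall, hs1⟩ := hs₀ (F ρ - 2 * m) (by linarith [le_max_right (a + 1) (s₀ + 2 * m)])
    have hρ₁ : 4 * |2 * m| + 3 ≤ ρ := (le_max_right _ _).trans hρ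
    have hlogρ : 0 ≤ log ρ := log_nonneg (by linarith [abs_nonneg (2 * m)])
    calc |F ρ - ρ + 2 * m * log ρ| = |2 * m * (log ρ - log (F ρ - 2 * m))| := by
          congr 1; linear_combination hFρ
      _ ≤ 6 * (2 * m) ^ 2 * ρ⁻¹ * log ρ :=
          abs_mul_log_sub_log_le hs1 hsmall hρ₁ (by linear_combination hFρ)
      _ ≤ (6 * (2 * m) ^ 2 + 1) * ρ⁻¹ * log ρ := by
          gcongr
          · exact inv_nonneg.2 (by linarith [abs_nonneg (2 * m)])
          · linarith
end

section
/- For every integer d ≥ 1 and every smooth compactly supported function u : (0,∞) → ℝ (i.e. u ∈ C_c^∞((0,∞))), one has the generalized Hardy inequality (∫₀^∞ x^{−2d} |u(x)|² dx)^{1/2} ≤ (2^{2d} d! / (2d)!) · (∫₀^∞ |u^{(d)}(x)|² dx)^{1/2}, where u^{(d)} denotes the d-th derivative of u. -/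
/-!
Integrating `(x ^ s * v ^ 2)' = s x ^ (s - 1) v ^ 2 + 2 x ^ s v v'` over `(0, ∞)` and absorbing the
cross term by `0 ≤ x ^ (s - 1) (s v + 2 x v') ^ 2` gives the one-derivative weighted Hardy
inequality `s ^ 2 ∫ x ^ (s - 1) v ^ 2 ≤ 4 ∫ x ^ (s + 1) v' ^ 2`. Applying it with
`s = -(2k + 1)` to `u, u', …, u^(d-1)` trades the weight `x ^ (-2d)` for `d` derivatives at the
cost of `∏_{k < d} 2 / (2k + 1) = 2 ^ (2d) d! / (2d)!`.
-/

open MeasureTheory Set Filter Finset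

section
variable {f g : ℝ → ℝ} (hf : Continuous f) (hg : Continuous g) (hsupp : tsupport f ⊆ Ioi 0)
include hf hg hsupp

lemma continuous_rpow_mul_mul_of_tsupport_subset_Ioi (s : ℝ) :
    Continuous fun x => x ^ s * (f x * g x) :=
  continuous_of_tsupport fun x hx =>
    (Real.continuousAt_rpow_const x s
      (.inl (hsupp (tsupport_mul_subset_left (tsupport_mul_subset_right hx))).ne')).mul
      (hf.mul hg).continuousAt

lemma integrable_rpow_mul_mul_of_tsupport_subset_Ioi (hcs : HasCompactSupport f) (s : ℝ) :
    Integrable fun x => x ^ s * (f x * g x) :=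
  (continuous_rpow_mul_mul_of_tsupport_subset_Ioi hf hg hsupp s).integrable_of_hasCompactSupport
    (hcs.mul_right (f' := g)).mul_left

end

section
variable {v : ℝ → ℝ} (hv : ContDiff ℝ 1 v) (hcs : HasCompactSupport v)
  (hsupp : tsupport v ⊆ Ioi 0)
include hv hcs hsupp

lemma integrable_rpow_mul_sq (s : ℝ) : Integrable fun x => x ^ s * v x ^ 2 := by
  simpa only [sq] using
    integrable_rpow_mul_mul_of_tsupport_subset_Ioi hv.continuous hv.continuous hsupp hcs s

lemma integrable_rpow_mul_deriv_sq (s : ℝ) : Integrable fun x => x ^ s * deriv v x ^ 2 := by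
  simpa only [sq] using integrable_rpow_mul_mul_of_tsupport_subset_Ioi hv.continuous_deriv_one
    hv.continuous_deriv_one (tsupport_deriv_subset.trans hsupp) hcs.deriv s

lemma integrable_rpow_mul_mul_deriv (s : ℝ) :
    Integrable fun x => x ^ s * (v x * deriv v x) :=
  integrable_rpow_mul_mul_of_tsupport_subset_Ioi hv.continuous hv.continuous_deriv_one hsupp hcs s

lemma mul_integral_rpow_mul_sq_eq (s : ℝ) :
    s * ∫ x in Ioi 0, x ^ (s - 1) * v x ^ 2 = -2 * ∫ x in Ioi 0, x ^ s * (v x * deriv v x) := by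
  have hF : Continuous fun x => x ^ s * v x ^ 2 := by
    simpa only [sq] using
      continuous_rpow_mul_mul_of_tsupport_subset_Ioi hv.continuous hv.continuous hsupp s
  have hF_deriv : ∀ x ∈ Ioi (0 : ℝ), HasDerivAt (fun x => x ^ s * v x ^ 2)
      (s * (x ^ (s - 1) * v x ^ 2) + 2 * (x ^ s * (v x * deriv v x))) x := by
    intro x hx
    refine ((Real.hasDerivAt_rpow_const (.inl (ne_of_gt hx))).mul
      (((hv.differentiable one_ne_zero) x).hasDerivAt.pow 2)).congr_deriv ?_
    simp only [Pi.pow_apply, Nat.cast_ofNat]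
    ring
  have hint1 := (integrable_rpow_mul_sq hv hcs hsupp (s - 1)).const_mul s
  have hint2 := (integrable_rpow_mul_mul_deriv hv hcs hsupp s).const_mul 2
  have hF_cs : HasCompactSupport fun x => x ^ s * v x ^ 2 :=
    (hcs.comp_left (g := fun y : ℝ => y ^ 2) (by norm_num)).mul_left
  have hFTC := integral_Ioi_of_hasDerivAt_of_tendsto hF.continuousWithinAt hF_deriv
    (hint1.fun_add hint2).integrableOn (hF_cs.is_zero_at_infty.mono_left atTop_le_cocompact)
  have hv0 : v 0 = 0 := image_eq_zero_of_notMem_tsupport fun h => lt_irrefl 0 (mem_Ioi.1 (hsupp h))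
  rw [integral_add hint1.integrableOn hint2.integrableOn, integral_const_mul, integral_const_mul,
    hv0, zero_pow two_ne_zero, mul_zero] at hFTC
  linarith

lemma sq_mul_integral_rpow_mul_sq_le (s : ℝ) :
    s ^ 2 * ∫ x in Ioi 0, x ^ (s - 1) * v x ^ 2 ≤
      4 * ∫ x in Ioi 0, x ^ (s + 1) * deriv v x ^ 2 := by
  have hpointwise : ∀ x ∈ Ioi (0 : ℝ), -2 * s * (x ^ s * (v x * deriv v x)) ≤
      s ^ 2 / 2 * (x ^ (s - 1) * v x ^ 2) + 2 * (x ^ (s + 1) * deriv v x ^ 2) := by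
    intro x (hx : 0 < x)
    have hs : x ^ s = x ^ (s - 1) * x := by rw [← Real.rpow_add_one hx.ne']; ring_nf
    have hs' : x ^ (s + 1) = x ^ (s - 1) * x ^ 2 := by
      rw [← Real.rpow_natCast, ← Real.rpow_add hx]; ring_nf
    rw [hs, hs']
    nlinarith [mul_nonneg (Real.rpow_nonneg hx.le (s - 1))
      (sq_nonneg (s * v x + 2 * x * deriv v x))]
  have hint1 := (integrable_rpow_mul_sq hv hcs hsupp (s - 1)).const_mul (s ^ 2 / 2)
  have hint2 := (integrable_rpow_mul_deriv_sq hv hcs hsupp (s + 1)).const_mul 2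
  have hmono := setIntegral_mono_on
    ((integrable_rpow_mul_mul_deriv hv hcs hsupp s).const_mul (-2 * s)).integrableOn
    (hint1.fun_add hint2).integrableOn measurableSet_Ioi hpointwise
  rw [integral_add hint1.integrableOn hint2.integrableOn, integral_const_mul, integral_const_mul,
    integral_const_mul] at hmono
  have hIBP : s ^ 2 * ∫ x in Ioi 0, x ^ (s - 1) * v x ^ 2 =
      -2 * s * ∫ x in Ioi 0, x ^ s * (v x * deriv v x) := by
    rw [sq, mul_assoc, mul_integral_rpow_mul_sq_eq hv hcs hsupp]
    ring
  linarith

end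

lemma prod_range_two_div_two_mul_add_one (k : ℕ) :
    ∏ j ∈ range k, (2 / (2 * j + 1) : ℝ) = 2 ^ (2 * k) * k.factorial / (2 * k).factorial := by
  induction k with
  | zero => simp
  | succ k ih =>
    rw [prod_range_succ, ih, show 2 * (k + 1) = 2 * k + 1 + 1 by ring, Nat.factorial_succ,
      Nat.factorial_succ, Nat.factorial_succ]
    push_cast
    field_simp
    ring

lemma integral_rpow_mul_sq_le_iteratedDeriv (k : ℕ) {v : ℝ → ℝ} (hv : ContDiff ℝ k v)
    (hcs : HasCompactSupport v) (hsupp : tsupport v ⊆ Ioi 0) :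
    ∫ x in Ioi 0, x ^ (-2 * k : ℝ) * v x ^ 2 ≤
      (∏ j ∈ range k, (2 / (2 * j + 1) : ℝ)) ^ 2 * ∫ x in Ioi 0, iteratedDeriv k v x ^ 2 := by
  induction k generalizing v with
  | zero => simp
  | succ k ih =>
    have hstep := sq_mul_integral_rpow_mul_sq_le (hv.of_le (by exact_mod_cast Nat.le_add_left 1 k))
      hcs hsupp (-(2 * k + 1))
    have hderiv := ih (contDiff_succ_iff_deriv.1 (by exact_mod_cast hv)).2.2 hcs.deriv
      (tsupport_deriv_subset.trans hsupp)
    rw [show -(2 * k + 1) - 1 = (-2 * (k + 1 : ℕ) : ℝ) by push_cast; ring,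
      show -(2 * k + 1) + 1 = (-2 * k : ℝ) by ring] at hstep
    rw [prod_range_succ, iteratedDeriv_succ']
    calc ∫ x in Ioi 0, x ^ (-2 * (k + 1 : ℕ) : ℝ) * v x ^ 2
        ≤ (2 / (2 * k + 1)) ^ 2 * ∫ x in Ioi 0, x ^ (-2 * k : ℝ) * deriv v x ^ 2 := by
          rw [div_pow, div_mul_eq_mul_div, le_div_iff₀ (by positivity), mul_comm]
          linarith
      _ ≤ _ := by
          rw [mul_pow, mul_comm (_ ^ 2) (_ ^ 2), mul_assoc]
          gcongr

theorem hardy_inequality_iterated_general (d : ℕ) (u : ℝ → ℝ)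
    (hu : ContDiff ℝ (⊤ : ℕ∞) u) (hcs : HasCompactSupport u)
    (hsupp : tsupport u ⊆ Set.Ioi (0 : ℝ)) :
    Real.sqrt (∫ x in Set.Ioi (0 : ℝ), x ^ (-2 * (d : ℤ)) * (u x) ^ 2) ≤
      (2 ^ (2 * d) * (Nat.factorial d) / (Nat.factorial (2 * d)) : ℝ) *
        Real.sqrt (∫ x in Set.Ioi (0 : ℝ), (iteratedDeriv d u x) ^ 2) := by
  have hweight (x : ℝ) : x ^ (-2 * (d : ℤ)) = x ^ (-2 * d : ℝ) := by
    rw [← Real.rpow_intCast]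
    push_cast
    rfl
  simp_rw [hweight]
  rw [← prod_range_two_div_two_mul_add_one,
    ← Real.sqrt_sq (prod_nonneg fun j _ => by positivity), ← Real.sqrt_mul (sq_nonneg _)]
  exact Real.sqrt_le_sqrt (integral_rpow_mul_sq_le_iteratedDeriv d
    (hu.of_le (by exact_mod_cast le_top)) hcs hsupp)

/-- Generalized Hardy inequality: for `d ≥ 1` and `u ∈ C_c^∞((0,∞))`,
`(∫₀^∞ x^{-2d} |u|² dx)^{1/2} ≤ (2^{2d} d! / (2d)!) (∫₀^∞ |u^{(d)}|² dx)^{1/2}`. -/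
theorem hardy_inequality_iterated (d : ℕ) (hd : 1 ≤ d) (u : ℝ → ℝ)
    (hu : ContDiff ℝ (⊤ : ℕ∞) u) (hcs : HasCompactSupport u)
    (hsupp : tsupport u ⊆ Set.Ioi (0 : ℝ)) :
    Real.sqrt (∫ x in Set.Ioi (0 : ℝ), x ^ (-2 * (d : ℤ)) * (u x) ^ 2) ≤
      (2 ^ (2 * d) * (Nat.factorial d) / (Nat.factorial (2 * d)) : ℝ) *
        Real.sqrt (∫ x in Set.Ioi (0 : ℝ), (iteratedDeriv d u x) ^ 2) :=
  hardy_inequality_iterated_general d u hu hcs hsupp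
end

section
/- Let a > 0 and let f : (0,1] → ℝ be measurable with I := ∫₀¹ ρ^{−2a} |f(ρ)|² dρ/ρ < ∞. Then ∫₀¹ |f(s)| ds/s < ∞; setting c := ∫₀¹ f(s) ds/s and u(ρ) := ∫_ρ¹ f(s) ds/s, one has |c|² ≤ (2a)^{−1} I and ∫₀¹ ρ^{−2a} |u(ρ) − c|² dρ/ρ ≤ a^{−2} I. In particular u(ρ) converges to the constant c as ρ → 0⁺, with remainder u − c lying in the weighted space of weight a. -/
/-!
With `c - u(ρ) = ∫₀^ρ f(s) ds/s`, everything rests on Cauchy–Schwarz against the weight `s^(b-1)`: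
`(∫₀^ρ |f| ds/s)² ≤ (ρ^b / b) ∫₀^ρ s^(-b) |f|² ds/s`. For `b = 2a`, `ρ = 1` this gives absolute
convergence and the bound on `c`. For `b = a` it bounds the remainder integrand by
`a⁻¹ ρ^(-a-1) ∫₀^ρ s^(-a) |f|² ds/s`, and Tonelli together with `∫_s^∞ ρ^(-a-1) dρ = s^(-a)/a`
gives the Hardy inequality. The limit is continuity of `u` on `[0, 1]`.
-/

open MeasureTheory Set Filter
open scoped ENNReal Topology

lemma lintegral_mul_sq_le {α : Type*} [MeasurableSpace α] {μ : Measure α} {p q : α → ℝ≥0∞}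
    (hp : AEMeasurable p μ) (hq : AEMeasurable q μ) :
    (∫⁻ x, p x * q x ∂μ) ^ 2 ≤ (∫⁻ x, p x ^ 2 ∂μ) * ∫⁻ x, q x ^ 2 ∂μ := by
  have h := ENNReal.lintegral_mul_le_Lp_mul_Lq μ Real.HolderConjugate.two_two hp hq
  simp only [ENNReal.rpow_two] at h
  calc (∫⁻ x, p x * q x ∂μ) ^ 2
      ≤ ((∫⁻ x, p x ^ 2 ∂μ) ^ (1 / 2 : ℝ) * (∫⁻ x, q x ^ 2 ∂μ) ^ (1 / 2 : ℝ)) ^ 2 :=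
        pow_le_pow_left₀ zero_le h 2
    _ = (∫⁻ x, p x ^ 2 ∂μ) * ∫⁻ x, q x ^ 2 ∂μ := by
      rw [mul_pow, ← ENNReal.rpow_two, ← ENNReal.rpow_two, ← ENNReal.rpow_mul,
        ← ENNReal.rpow_mul]
      norm_num

lemma integrable_and_integral_le_of_lintegral_ofReal_le {α : Type*} [MeasurableSpace α]
    {μ : Measure α} {g : α → ℝ} (hg : 0 ≤ᵐ[μ] g) (hgm : AEStronglyMeasurable g μ) {C : ℝ}
    (hC : 0 ≤ C) (h : ∫⁻ x, ENNReal.ofReal (g x) ∂μ ≤ ENNReal.ofReal C) :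
    Integrable g μ ∧ ∫ x, g x ∂μ ≤ C := by
  refine ⟨⟨hgm, ?_⟩, ?_⟩
  · rw [hasFiniteIntegral_iff_ofReal hg]
    exact h.trans_lt ENNReal.ofReal_lt_top
  · rw [integral_eq_lintegral_of_nonneg_ae hg hgm]
    exact ENNReal.toReal_le_of_le_ofReal hC h

lemma ofReal_sq_eq_enorm_sq (x : ℝ) : ENNReal.ofReal (x ^ 2) = ‖x‖ₑ ^ 2 := by
  rw [Real.enorm_eq_ofReal_abs, ← ENNReal.ofReal_pow (abs_nonneg x), sq_abs]

lemma lintegral_Ioc_rpow_sub_one {b ρ : ℝ} (hb : 0 < b) (hρ : 0 ≤ ρ) :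
    ∫⁻ s in Ioc 0 ρ, ENNReal.ofReal (s ^ (b - 1)) = ENNReal.ofReal (ρ ^ b / b) := by
  have hr : -1 < b - 1 := by linarith
  have hint : IntegrableOn (fun s : ℝ => s ^ (b - 1)) (Ioc 0 ρ) :=
    (intervalIntegrable_iff_integrableOn_Ioc_of_le hρ).mp
      (intervalIntegral.intervalIntegrable_rpow' hr)
  rw [← ofReal_integral_eq_lintegral_ofReal hint, ← intervalIntegral.integral_of_le hρ,
    integral_rpow (Or.inl hr), sub_add_cancel, Real.zero_rpow hb.ne', sub_zero]
  filter_upwards [ae_restrict_mem measurableSet_Ioc] with s hs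
  exact Real.rpow_nonneg hs.1.le _

lemma lintegral_Ioi_rpow_neg_sub_one {a s : ℝ} (ha : 0 < a) (hs : 0 < s) :
    ∫⁻ ρ in Ioi s, ENNReal.ofReal (ρ ^ (-a - 1)) = ENNReal.ofReal (s ^ (-a) / a) := by
  have hr : -a - 1 < -1 := by linarith
  rw [← ofReal_integral_eq_lintegral_ofReal (integrableOn_Ioi_rpow_of_lt hr hs),
    integral_Ioi_rpow_of_lt hr hs, sub_add_cancel, div_neg, neg_div, neg_neg]
  filter_upwards [ae_restrict_mem measurableSet_Ioi] with ρ hρ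
  exact Real.rpow_nonneg (hs.trans hρ).le _

theorem sq_lintegral_enorm_div_le {b ρ : ℝ} (hb : 0 < b) (hρ : 0 ≤ ρ) {f : ℝ → ℝ}
    (hf : AEMeasurable f) :
    (∫⁻ s in Ioc 0 ρ, ‖f s / s‖ₑ) ^ 2 ≤
      ENNReal.ofReal (ρ ^ b / b) * ∫⁻ s in Ioc 0 ρ, ENNReal.ofReal (s ^ (-b) * f s ^ 2 / s) := by
  set p : ℝ → ℝ≥0∞ := fun s => ‖s ^ (-(b + 1) / 2) * f s‖ₑ
  set q : ℝ → ℝ≥0∞ := fun s => ‖s ^ ((b - 1) / 2)‖ₑ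
  have hpq : ∀ s ∈ Ioc (0 : ℝ) ρ, ‖f s / s‖ₑ = p s * q s := fun s hs => by
    rw [← enorm_mul, mul_right_comm, ← Real.rpow_add hs.1,
      show -(b + 1) / 2 + (b - 1) / 2 = -1 by ring, Real.rpow_neg_one, div_eq_inv_mul]
  have hp : ∀ s ∈ Ioc (0 : ℝ) ρ, p s ^ 2 = ENNReal.ofReal (s ^ (-b) * f s ^ 2 / s) := fun s hs => by
    rw [← ofReal_sq_eq_enorm_sq, mul_pow, ← Real.rpow_mul_natCast hs.1.le,
      show -(b + 1) / 2 * ((2 : ℕ) : ℝ) = -b - 1 by push_cast; ring,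
      Real.rpow_sub_one hs.1.ne']
    ring_nf
  have hq : ∀ s ∈ Ioc (0 : ℝ) ρ, q s ^ 2 = ENNReal.ofReal (s ^ (b - 1)) := fun s hs => by
    rw [← ofReal_sq_eq_enorm_sq, ← Real.rpow_mul_natCast hs.1.le]
    push_cast
    ring_nf
  calc (∫⁻ s in Ioc 0 ρ, ‖f s / s‖ₑ) ^ 2 = (∫⁻ s in Ioc 0 ρ, p s * q s) ^ 2 := by
        rw [setLIntegral_congr_fun measurableSet_Ioc hpq]
    _ ≤ (∫⁻ s in Ioc 0 ρ, p s ^ 2) * ∫⁻ s in Ioc 0 ρ, q s ^ 2 :=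
        lintegral_mul_sq_le (by fun_prop) (by fun_prop)
    _ = _ := by
        rw [setLIntegral_congr_fun measurableSet_Ioc hp,
          setLIntegral_congr_fun measurableSet_Ioc hq, lintegral_Ioc_rpow_sub_one hb hρ, mul_comm]

theorem lintegral_rpow_mul_lintegral_Ioc_le {a T : ℝ} (ha : 0 < a) {g : ℝ → ℝ≥0∞}
    (hg : Measurable g) :
    ∫⁻ ρ in Ioc 0 T, ENNReal.ofReal (ρ ^ (-a - 1)) * ∫⁻ s in Ioc 0 ρ, g s ≤
      ENNReal.ofReal a⁻¹ * ∫⁻ s in Ioc 0 T, ENNReal.ofReal (s ^ (-a)) * g s := by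
  set F : ℝ → ℝ → ℝ≥0∞ := fun ρ s =>
    {p : ℝ × ℝ | p.2 ≤ p.1}.indicator (fun p => ENNReal.ofReal (p.1 ^ (-a - 1)) * g p.2) (ρ, s)
  have hF : Measurable (Function.uncurry F) :=
    Measurable.indicator (by fun_prop) (measurableSet_le measurable_snd measurable_fst)
  have h_inner : ∀ ρ ∈ Ioc (0 : ℝ) T,
      ENNReal.ofReal (ρ ^ (-a - 1)) * ∫⁻ s in Ioc 0 ρ, g s = ∫⁻ s in Ioc 0 T, F ρ s := by
    intro ρ hρ
    have hF_eq : F ρ = (Iic ρ).indicator fun s => ENNReal.ofReal (ρ ^ (-a - 1)) * g s := by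
      ext s; simp [F, indicator_apply]
    rw [hF_eq, lintegral_indicator measurableSet_Iic, Measure.restrict_restrict measurableSet_Iic,
      Iic_inter_Ioc_of_le hρ.2, lintegral_const_mul _ hg]
  have h_outer : ∀ s ∈ Ioc (0 : ℝ) T,
      ∫⁻ ρ in Ioc 0 T, F ρ s ≤ ENNReal.ofReal a⁻¹ * (ENNReal.ofReal (s ^ (-a)) * g s) := by
    intro s hs
    have hF_eq :
        (fun ρ => F ρ s) = (Ici s).indicator fun ρ => ENNReal.ofReal (ρ ^ (-a - 1)) * g s := by
      ext ρ; simp [F, indicator_apply]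
    calc ∫⁻ ρ in Ioc 0 T, F ρ s
        = ∫⁻ ρ in Ici s ∩ Ioc 0 T, ENNReal.ofReal (ρ ^ (-a - 1)) * g s := by
          rw [hF_eq, lintegral_indicator measurableSet_Ici,
            Measure.restrict_restrict measurableSet_Ici]
      _ ≤ ∫⁻ ρ in Ioi s, ENNReal.ofReal (ρ ^ (-a - 1)) * g s := by
          rw [Measure.restrict_congr_set Ioi_ae_eq_Ici]
          exact lintegral_mono_set inter_subset_left
      _ = ENNReal.ofReal a⁻¹ * (ENNReal.ofReal (s ^ (-a)) * g s) := by
          rw [lintegral_mul_const _ (by fun_prop), lintegral_Ioi_rpow_neg_sub_one ha hs.1,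
            ← mul_assoc, ← ENNReal.ofReal_mul (inv_nonneg.mpr ha.le), inv_mul_eq_div]
  calc ∫⁻ ρ in Ioc 0 T, ENNReal.ofReal (ρ ^ (-a - 1)) * ∫⁻ s in Ioc 0 ρ, g s
      = ∫⁻ ρ in Ioc 0 T, ∫⁻ s in Ioc 0 T, F ρ s := setLIntegral_congr_fun measurableSet_Ioc h_inner
    _ = ∫⁻ s in Ioc 0 T, ∫⁻ ρ in Ioc 0 T, F ρ s := lintegral_lintegral_swap hF.aemeasurable
    _ ≤ ∫⁻ s in Ioc 0 T, ENNReal.ofReal a⁻¹ * (ENNReal.ofReal (s ^ (-a)) * g s) :=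
        setLIntegral_mono' measurableSet_Ioc h_outer
    _ = _ := lintegral_const_mul _ (by fun_prop)

theorem lintegral_rpow_mul_sq_lintegral_enorm_div_le {a T : ℝ} (ha : 0 < a) {f : ℝ → ℝ}
    (hf : Measurable f) :
    ∫⁻ ρ in Ioc 0 T, ENNReal.ofReal (ρ ^ (-(2 * a)) / ρ) * (∫⁻ s in Ioc 0 ρ, ‖f s / s‖ₑ) ^ 2 ≤
      ENNReal.ofReal (a⁻¹ ^ 2) *
        ∫⁻ s in Ioc 0 T, ENNReal.ofReal (s ^ (-(2 * a)) * f s ^ 2 / s) := by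
  set g : ℝ → ℝ≥0∞ := fun s => ENNReal.ofReal (s ^ (-a) * f s ^ 2 / s)
  have h_pt : ∀ ρ ∈ Ioc (0 : ℝ) T,
      ENNReal.ofReal (ρ ^ (-(2 * a)) / ρ) * (∫⁻ s in Ioc 0 ρ, ‖f s / s‖ₑ) ^ 2 ≤
        ENNReal.ofReal a⁻¹ * (ENNReal.ofReal (ρ ^ (-a - 1)) * ∫⁻ s in Ioc 0 ρ, g s) := by
    intro ρ hρ
    have h_weight : ρ ^ (-(2 * a)) / ρ * (ρ ^ a / a) = a⁻¹ * ρ ^ (-a - 1) := by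
      rw [Real.rpow_sub_one hρ.1.ne', show -a = -(2 * a) + a by ring, Real.rpow_add hρ.1]
      ring
    calc ENNReal.ofReal (ρ ^ (-(2 * a)) / ρ) * (∫⁻ s in Ioc 0 ρ, ‖f s / s‖ₑ) ^ 2
        ≤ ENNReal.ofReal (ρ ^ (-(2 * a)) / ρ) *
            (ENNReal.ofReal (ρ ^ a / a) * ∫⁻ s in Ioc 0 ρ, g s) := by
          gcongr
          exact sq_lintegral_enorm_div_le ha hρ.1.le hf.aemeasurable
      _ = _ := by
          rw [← mul_assoc, ← ENNReal.ofReal_mul (div_nonneg (Real.rpow_nonneg hρ.1.le _) hρ.1.le),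
            h_weight, ENNReal.ofReal_mul (inv_nonneg.mpr ha.le), mul_assoc]
  have h_g : ∀ s ∈ Ioc (0 : ℝ) T,
      ENNReal.ofReal (s ^ (-a)) * g s = ENNReal.ofReal (s ^ (-(2 * a)) * f s ^ 2 / s) := by
    intro s hs
    rw [← ENNReal.ofReal_mul (Real.rpow_nonneg hs.1.le _), show -(2 * a) = -a + -a by ring,
      Real.rpow_add hs.1]
    ring_nf
  calc ∫⁻ ρ in Ioc 0 T, ENNReal.ofReal (ρ ^ (-(2 * a)) / ρ) * (∫⁻ s in Ioc 0 ρ, ‖f s / s‖ₑ) ^ 2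
      ≤ ∫⁻ ρ in Ioc 0 T, ENNReal.ofReal a⁻¹ *
          (ENNReal.ofReal (ρ ^ (-a - 1)) * ∫⁻ s in Ioc 0 ρ, g s) :=
        setLIntegral_mono' measurableSet_Ioc h_pt
    _ = ENNReal.ofReal a⁻¹ *
          ∫⁻ ρ in Ioc 0 T, ENNReal.ofReal (ρ ^ (-a - 1)) * ∫⁻ s in Ioc 0 ρ, g s :=
        lintegral_const_mul' _ _ ENNReal.ofReal_ne_top
    _ ≤ ENNReal.ofReal a⁻¹ *
          (ENNReal.ofReal a⁻¹ * ∫⁻ s in Ioc 0 T, ENNReal.ofReal (s ^ (-a)) * g s) := by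
        gcongr
        exact lintegral_rpow_mul_lintegral_Ioc_le ha (by fun_prop)
    _ = _ := by
        rw [setLIntegral_congr_fun measurableSet_Ioc h_g, ← mul_assoc,
          ← ENNReal.ofReal_mul (inv_nonneg.mpr ha.le), sq]

section IocIntegral

variable {E : Type*} [NormedAddCommGroup E] [NormedSpace ℝ E] {φ : ℝ → E} {a b : ℝ}

lemma continuousOn_setIntegral_Ioc_left (hab : a ≤ b) (hφ : IntegrableOn φ (Ioc a b)) :
    ContinuousOn (fun x => ∫ t in Ioc x b, φ t) (Icc a b) := by
  have hφ' : IntegrableOn φ (uIcc a b) := by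
    rw [uIcc_of_le hab]
    exact (integrableOn_Icc_iff_integrableOn_Ioc).mpr hφ
  have h := intervalIntegral.continuousOn_primitive_interval_left hφ'
  rw [uIcc_of_le hab] at h
  exact h.congr fun x hx => (intervalIntegral.integral_of_le hx.2).symm

lemma enorm_setIntegral_Ioc_sub_le (hφ : IntegrableOn φ (Ioc a b)) {x : ℝ} (hx : x ∈ Icc a b) :
    ‖(∫ t in Ioc x b, φ t) - ∫ t in Ioc a b, φ t‖ₑ ≤ ∫⁻ t in Ioc a x, ‖φ t‖ₑ := by
  rw [← Ioc_union_Ioc_eq_Ioc hx.1 hx.2, setIntegral_union (Ioc_disjoint_Ioc_of_le le_rfl)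
    measurableSet_Ioc (hφ.mono_set (Ioc_subset_Ioc_right hx.2))
    (hφ.mono_set (Ioc_subset_Ioc_left hx.1)), sub_add_cancel_right, enorm_neg]
  exact enorm_integral_le_lintegral_enorm _

lemma tendsto_setIntegral_Ioc_nhdsGT (hab : a < b) (hφ : IntegrableOn φ (Ioc a b)) :
    Tendsto (fun x => ∫ t in Ioc x b, φ t) (𝓝[>] a) (𝓝 (∫ t in Ioc a b, φ t)) :=
  ((continuousOn_setIntegral_Ioc_left hab.le hφ a (left_mem_Icc.mpr hab.le)).mono_of_mem_nhdsWithin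
    (Icc_mem_nhdsGT hab)).tendsto

end IocIntegral

section WeightedSpace

variable {f : ℝ → ℝ}

lemma lintegral_weighted_sq_eq_ofReal {b : ℝ}
    (hI : IntegrableOn (fun ρ => ρ ^ b * f ρ ^ 2 / ρ) (Ioc 0 1)) :
    ∫⁻ ρ in Ioc 0 1, ENNReal.ofReal (ρ ^ b * f ρ ^ 2 / ρ) =
      ENNReal.ofReal (∫ ρ in Ioc 0 1, ρ ^ b * f ρ ^ 2 / ρ) := by
  refine (ofReal_integral_eq_lintegral_ofReal hI ?_).symm
  filter_upwards [ae_restrict_mem measurableSet_Ioc] with ρ hρ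
  have := hρ.1
  positivity

lemma sq_lintegral_enorm_div_le_inv_mul {b : ℝ} (hb : 0 < b) (hf : AEMeasurable f)
    (hI : IntegrableOn (fun ρ => ρ ^ (-b) * f ρ ^ 2 / ρ) (Ioc 0 1)) :
    (∫⁻ s in Ioc 0 1, ‖f s / s‖ₑ) ^ 2 ≤
      ENNReal.ofReal (b⁻¹ * ∫ ρ in Ioc 0 1, ρ ^ (-b) * f ρ ^ 2 / ρ) := by
  have h := sq_lintegral_enorm_div_le hb zero_le_one hf
  rwa [Real.one_rpow, one_div, lintegral_weighted_sq_eq_ofReal hI,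
    ← ENNReal.ofReal_mul (inv_nonneg.mpr hb.le)] at h

lemma integrableOn_div_of_weighted {b : ℝ} (hb : 0 < b) (hf : AEMeasurable f)
    (hI : IntegrableOn (fun ρ => ρ ^ (-b) * f ρ ^ 2 / ρ) (Ioc 0 1)) :
    IntegrableOn (fun s => f s / s) (Ioc 0 1) := by
  refine ⟨(hf.div aemeasurable_id).aestronglyMeasurable.restrict, ?_⟩
  have h := (sq_lintegral_enorm_div_le_inv_mul hb hf hI).trans_lt ENNReal.ofReal_lt_top
  exact (ENNReal.pow_lt_top_iff.mp h).resolve_right two_ne_zero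

lemma sq_setIntegral_div_le {b : ℝ} (hb : 0 < b) (hf : AEMeasurable f)
    (hI : IntegrableOn (fun ρ => ρ ^ (-b) * f ρ ^ 2 / ρ) (Ioc 0 1)) :
    (∫ s in Ioc 0 1, f s / s) ^ 2 ≤ b⁻¹ * ∫ ρ in Ioc 0 1, ρ ^ (-b) * f ρ ^ 2 / ρ := by
  have hI_nonneg : 0 ≤ ∫ ρ in Ioc 0 1, ρ ^ (-b) * f ρ ^ 2 / ρ :=
    setIntegral_nonneg measurableSet_Ioc fun ρ hρ => by have := hρ.1; positivity
  rw [← ENNReal.ofReal_le_ofReal_iff (by positivity), ofReal_sq_eq_enorm_sq]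
  exact (pow_le_pow_left₀ zero_le (enorm_integral_le_lintegral_enorm _) 2).trans
    (sq_lintegral_enorm_div_le_inv_mul hb hf hI)

theorem integrableOn_remainder_and_integral_le {a : ℝ} (ha : 0 < a) (hf : Measurable f)
    (hI : IntegrableOn (fun ρ => ρ ^ (-(2 * a)) * f ρ ^ 2 / ρ) (Ioc 0 1)) :
    IntegrableOn (fun ρ => ρ ^ (-(2 * a)) *
        ((∫ s in Ioc ρ 1, f s / s) - ∫ s in Ioc 0 1, f s / s) ^ 2 / ρ) (Ioc 0 1) ∧
    ∫ ρ in Ioc 0 1, ρ ^ (-(2 * a)) * ((∫ s in Ioc ρ 1, f s / s) - ∫ s in Ioc 0 1, f s / s) ^ 2 / ρ ≤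
      a⁻¹ ^ 2 * ∫ ρ in Ioc 0 1, ρ ^ (-(2 * a)) * f ρ ^ 2 / ρ := by
  have hφ := integrableOn_div_of_weighted (by positivity) hf.aemeasurable hI
  have h_nonneg : 0 ≤ᵐ[volume.restrict (Ioc 0 1)] fun ρ => ρ ^ (-(2 * a)) *
      ((∫ s in Ioc ρ 1, f s / s) - ∫ s in Ioc 0 1, f s / s) ^ 2 / ρ := by
    filter_upwards [ae_restrict_mem measurableSet_Ioc] with ρ hρ
    have := hρ.1
    positivity
  have h_meas : AEStronglyMeasurable (fun ρ => ρ ^ (-(2 * a)) *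
      ((∫ s in Ioc ρ 1, f s / s) - ∫ s in Ioc 0 1, f s / s) ^ 2 / ρ)
      (volume.restrict (Ioc 0 1)) := by
    have hu := ((continuousOn_setIntegral_Ioc_left zero_le_one hφ).mono
      Ioc_subset_Icc_self).aestronglyMeasurable (μ := volume) measurableSet_Ioc
    exact ((measurable_id.pow_const _).aestronglyMeasurable.mul
      ((hu.sub aestronglyMeasurable_const).pow 2)).div₀ measurable_id.aestronglyMeasurable
  have h_pt : ∀ ρ ∈ Ioc (0 : ℝ) 1,
      ENNReal.ofReal (ρ ^ (-(2 * a)) *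
        ((∫ s in Ioc ρ 1, f s / s) - ∫ s in Ioc 0 1, f s / s) ^ 2 / ρ) ≤
      ENNReal.ofReal (ρ ^ (-(2 * a)) / ρ) * (∫⁻ s in Ioc 0 ρ, ‖f s / s‖ₑ) ^ 2 := by
    intro ρ hρ
    rw [mul_div_right_comm, ENNReal.ofReal_mul (div_nonneg (Real.rpow_nonneg hρ.1.le _) hρ.1.le),
      ofReal_sq_eq_enorm_sq]
    gcongr
    exact enorm_setIntegral_Ioc_sub_le hφ (Ioc_subset_Icc_self hρ)
  refine integrable_and_integral_le_of_lintegral_ofReal_le h_nonneg h_meas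
    (mul_nonneg (by positivity) (setIntegral_nonneg measurableSet_Ioc fun ρ hρ => ?_)) ?_
  · have := hρ.1
    positivity
  calc _ ≤ _ := setLIntegral_mono' measurableSet_Ioc h_pt
    _ ≤ _ := lintegral_rpow_mul_sq_lintegral_enorm_div_le ha hf
    _ = _ := by
      rw [lintegral_weighted_sq_eq_ofReal hI, ENNReal.ofReal_mul (by positivity)]

end WeightedSpace

/-- For a weight `a > 0`, a solution `u(ρ) = ∫_ρ¹ f(s) ds/s` of `ρ ∂_ρ u = -f` with
`I = ∫₀¹ ρ^{-2a} |f|² dρ/ρ < ∞` has a constant leading term `c = ∫₀¹ f(s) ds/s` (the integral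
converging absolutely), with `|c|² ≤ (2a)⁻¹ I`, and the remainder `u - c` lies in the weighted
space of weight `a`: `∫₀¹ ρ^{-2a} |u - c|² dρ/ρ ≤ a⁻² I`; in particular `u(ρ) → c` as
`ρ → 0⁺`. -/
theorem weighted_ode_positive_weight (a : ℝ) (ha : 0 < a) (f : ℝ → ℝ)
    (hf : Measurable f)
    (hI : IntegrableOn (fun ρ => ρ ^ (-(2 * a)) * (f ρ) ^ 2 / ρ) (Ioc 0 1)) :
    IntegrableOn (fun s => |f s| / s) (Ioc (0 : ℝ) 1) ∧
    (∫ s in Ioc (0 : ℝ) 1, f s / s) ^ 2 ≤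
      (2 * a)⁻¹ * (∫ ρ in Ioc (0 : ℝ) 1, ρ ^ (-(2 * a)) * (f ρ) ^ 2 / ρ) ∧
    IntegrableOn
      (fun ρ => ρ ^ (-(2 * a)) *
        ((∫ s in Ioc ρ 1, f s / s) - ∫ s in Ioc (0 : ℝ) 1, f s / s) ^ 2 / ρ) (Ioc 0 1) ∧
    (∫ ρ in Ioc (0 : ℝ) 1, ρ ^ (-(2 * a)) *
        ((∫ s in Ioc ρ 1, f s / s) - ∫ s in Ioc (0 : ℝ) 1, f s / s) ^ 2 / ρ) ≤
      a⁻¹ ^ 2 * (∫ ρ in Ioc (0 : ℝ) 1, ρ ^ (-(2 * a)) * (f ρ) ^ 2 / ρ) ∧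
    Tendsto (fun ρ : ℝ => ∫ s in Ioc ρ 1, f s / s) (nhdsWithin 0 (Ioi 0))
      (nhds (∫ s in Ioc (0 : ℝ) 1, f s / s)) := by
  have h2a : 0 < 2 * a := by positivity
  have hφ := integrableOn_div_of_weighted h2a hf.aemeasurable hI
  obtain ⟨h_int, h_le⟩ := integrableOn_remainder_and_integral_le ha hf hI
  refine ⟨hφ.abs.congr ?_, sq_setIntegral_div_le h2a hf.aemeasurable hI, h_int, h_le,
    tendsto_setIntegral_Ioc_nhdsGT one_pos hφ⟩
  filter_upwards [ae_restrict_mem measurableSet_Ioc] with s hs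
  rw [abs_div, abs_of_pos hs.1]
end

section
/- Let b₁ < b₂ be real numbers and let f : (0,1]×(0,1] → ℝ be measurable with J := ∫₀¹∫₀¹ ρ₁^{−2b₁} ρ₂^{−2b₂} |f(ρ₁,ρ₂)|² (dρ₁/ρ₁)(dρ₂/ρ₂) < ∞. Define u(ρ₁,ρ₂) := ∫_{ρ₁}¹ f(ρ₁/t, t·ρ₂) dt/t (the integrand is defined since ρ₁/t ∈ [ρ₁,1] and tρ₂ ∈ (0,ρ₂] for t ∈ [ρ₁,1]). Then the defining integral converges absolutely for almost every (ρ₁,ρ₂) ∈ (0,1]², and ∫₀¹∫₀¹ ρ₁^{−2b₁} ρ₂^{−2b₂} |u(ρ₁,ρ₂)|² (dρ₁/ρ₁)(dρ₂/ρ₂) ≤ (b₂ − b₁)^{−2} · J. -/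
/-!
Put `F = ρ₁^{-b₁} ρ₂^{-b₂} |f|`, extended by zero off `(0,1]²`, and `ε = b₂ - b₁`. The weighted
solution is dominated by `∫₀¹ F(ρ₁/t, tρ₂) dν(t)` with `ν = t^ε dt/t`, a measure of mass `ε⁻¹`.
Cauchy–Schwarz against `ν` and Tonelli reduce the estimate to the invariance of `dρ₁/ρ₁ dρ₂/ρ₂`
under the dilations `(ρ₁, ρ₂) ↦ (ρ₁/t, tρ₂)`, which holds because `dρ/ρ` is Lebesgue measure in
the coordinate `log ρ`.
-/

open MeasureTheory Set
open scoped ENNReal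

lemma rpow_neg_mul_rpow_neg_mul_div {x y t : ℝ} (hx : 0 < x) (hy : 0 < y) (ht : 0 < t)
    (b₁ b₂ z : ℝ) :
    x ^ (-b₁) * y ^ (-b₂) * (z / t) =
      t ^ (b₂ - b₁ - 1) * ((x / t) ^ (-b₁) * (t * y) ^ (-b₂) * z) := by
  rw [Real.div_rpow hx.le ht.le, Real.mul_rpow ht.le hy.le, Real.rpow_sub ht, Real.rpow_sub ht,
    Real.rpow_neg ht.le, Real.rpow_neg ht.le, Real.rpow_one]
  field_simp

lemma ofReal_rpow_mul_rpow_mul_sq_div {x y : ℝ} (hx : 0 < x) (hy : 0 < y) (b₁ b₂ z : ℝ) :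
    ENNReal.ofReal (x ^ (-(2 * b₁)) * y ^ (-(2 * b₂)) * z ^ 2 / (x * y)) =
      ENNReal.ofReal (x * y)⁻¹ * ‖x ^ (-b₁) * y ^ (-b₂) * z‖ₑ ^ 2 := by
  have hsq : ∀ {r : ℝ}, 0 < r → ∀ b : ℝ, r ^ (-(2 * b)) = (r ^ (-b)) ^ 2 := fun hr b => by
    rw [← Real.rpow_natCast, ← Real.rpow_mul hr.le]; ring_nf
  rw [hsq hx, hsq hy, Real.enorm_eq_ofReal_abs, ← ENNReal.ofReal_pow (abs_nonneg _), sq_abs,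
    ← ENNReal.ofReal_mul (inv_nonneg.2 (mul_pos hx hy).le)]
  congr 1
  ring

lemma lintegral_Ioc_rpow_sub_one_s5 {ε : ℝ} (hε : 0 < ε) :
    ∫⁻ t in Ioc (0 : ℝ) 1, ENNReal.ofReal (t ^ (ε - 1)) = ENNReal.ofReal ε⁻¹ := by
  have hint : IntegrableOn (fun t : ℝ => t ^ (ε - 1)) (Ioc 0 1) :=
    (intervalIntegrable_iff_integrableOn_Ioc_of_le zero_le_one).1
      (intervalIntegral.intervalIntegrable_rpow' (by linarith))
  rw [← ofReal_integral_eq_lintegral_ofReal hint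
    ((ae_restrict_mem measurableSet_Ioc).mono fun t ht => Real.rpow_nonneg ht.1.le _),
    ← intervalIntegral.integral_of_le zero_le_one, integral_rpow (Or.inl (by linarith)),
    sub_add_cancel, Real.one_rpow, Real.zero_rpow hε.ne', sub_zero, one_div]

lemma sq_lintegral_le_measure_univ_mul {α : Type*} [MeasurableSpace α] (μ : Measure α)
    {g : α → ℝ≥0∞} (hg : AEMeasurable g μ) :
    (∫⁻ a, g a ∂μ) ^ 2 ≤ μ univ * ∫⁻ a, g a ^ 2 ∂μ := by
  have := ENNReal.lintegral_mul_le_Lp_mul_Lq μ Real.HolderConjugate.two_two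
    (aemeasurable_const (b := (1 : ℝ≥0∞))) hg
  simp only [Pi.mul_apply, one_mul, ENNReal.one_rpow, lintegral_const,
    ← ENNReal.mul_rpow_of_nonneg _ _ (by norm_num : (0 : ℝ) ≤ 1 / 2)] at this
  calc (∫⁻ a, g a ∂μ) ^ 2 ≤ ((μ univ * ∫⁻ a, g a ^ (2 : ℝ) ∂μ) ^ (1 / 2 : ℝ)) ^ 2 := by gcongr
    _ = μ univ * ∫⁻ a, g a ^ 2 ∂μ := by
      rw [← ENNReal.rpow_natCast, ← ENNReal.rpow_mul]
      norm_num

lemma measurable_setLIntegral_Ioc {α : Type*} [MeasurableSpace α] {k : α → ℝ → ℝ≥0∞}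
    (hk : Measurable (Function.uncurry k)) {a : α → ℝ} (ha : Measurable a) (b : ℝ) :
    Measurable fun x => ∫⁻ t in Ioc (a x) b, k x t := by
  have hs : MeasurableSet {q : α × ℝ | q.2 ∈ Ioc (a q.1) b} :=
    (measurableSet_lt (ha.comp measurable_fst) measurable_snd).inter
      (measurableSet_le measurable_snd measurable_const)
  convert (hk.indicator hs).lintegral_prod_right' (ν := volume) using 2 with x
  rw [← lintegral_indicator measurableSet_Ioc]
  rfl

lemma stronglyMeasurable_setIntegral_Ioc {α E : Type*} [MeasurableSpace α]
    [NormedAddCommGroup E] [NormedSpace ℝ E] {k : α → ℝ → E}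
    (hk : StronglyMeasurable (Function.uncurry k)) {a : α → ℝ} (ha : Measurable a) (b : ℝ) :
    StronglyMeasurable fun x => ∫ t in Ioc (a x) b, k x t := by
  have hs : MeasurableSet {q : α × ℝ | q.2 ∈ Ioc (a q.1) b} :=
    (measurableSet_lt (ha.comp measurable_fst) measurable_snd).inter
      (measurableSet_le measurable_snd measurable_const)
  convert (hk.indicator hs).integral_prod_right' (ν := volume) using 2 with x
  rw [← integral_indicator measurableSet_Ioc]
  rfl

lemma integrable_and_integral_le_of_lintegral_le {α : Type*} [MeasurableSpace α]
    {μ : Measure α} {g F : α → ℝ} (hg : AEStronglyMeasurable g μ) (hg₀ : 0 ≤ᵐ[μ] g)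
    (hF : Integrable F μ) (hF₀ : 0 ≤ᵐ[μ] F) {c : ℝ} (hc : 0 ≤ c)
    (hle : ∫⁻ a, ENNReal.ofReal (g a) ∂μ ≤ ENNReal.ofReal c * ∫⁻ a, ENNReal.ofReal (F a) ∂μ) :
    Integrable g μ ∧ ∫ a, g a ∂μ ≤ c * ∫ a, F a ∂μ := by
  have hfin : ENNReal.ofReal c * ∫⁻ a, ENNReal.ofReal (F a) ∂μ < ∞ :=
    ENNReal.mul_lt_top ENNReal.ofReal_lt_top hF.lintegral_lt_top
  refine ⟨⟨hg, (hasFiniteIntegral_iff_ofReal hg₀).2 (hle.trans_lt hfin)⟩, ?_⟩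
  rw [integral_eq_lintegral_of_nonneg_ae hg₀ hg, ← ENNReal.toReal_ofReal hc,
    integral_eq_lintegral_of_nonneg_ae hF₀ hF.1, ← ENNReal.toReal_mul]
  exact ENNReal.toReal_mono hfin.ne hle

noncomputable def bMeasure : Measure ℝ := Measure.map Real.exp volume

instance : SFinite bMeasure := by unfold bMeasure; infer_instance

lemma bMeasure_eq_withDensity :
    bMeasure = (volume.restrict (Ioi 0)).withDensity fun x => ENNReal.ofReal x⁻¹ := by
  ext s hs
  have hderiv : ∀ x ∈ Real.exp ⁻¹' s, HasDerivWithinAt Real.exp (Real.exp x) (Real.exp ⁻¹' s) x :=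
    fun x _ => (Real.hasDerivAt_exp x).hasDerivWithinAt
  rw [bMeasure, Measure.map_apply Real.measurable_exp hs, withDensity_apply _ hs,
    Measure.restrict_restrict hs, ← Real.range_exp, ← image_preimage_eq_inter_range,
    lintegral_image_eq_lintegral_abs_deriv_mul (hs.preimage Real.measurable_exp) hderiv
      Real.exp_injective.injOn]
  simp [abs_of_pos, Real.exp_pos, ENNReal.mul_inv_cancel]

lemma measurePreserving_mul_left_bMeasure {c : ℝ} (hc : 0 < c) :
    MeasurePreserving (c * ·) bMeasure bMeasure := by
  have hexp : MeasurePreserving Real.exp volume bMeasure := ⟨Real.measurable_exp, rfl⟩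
  have htrans := hexp.comp (measurePreserving_add_left volume (Real.log c))
  refine ⟨measurable_const_mul c, ?_⟩
  have hcomm : (c * ·) ∘ Real.exp = Real.exp ∘ (Real.log c + ·) := by
    funext x
    simp [Real.exp_add, Real.exp_log hc]
  rw [bMeasure, Measure.map_map (measurable_const_mul c) Real.measurable_exp, hcomm]
  exact htrans.map_eq

lemma measurePreserving_dilation {t : ℝ} (ht : 0 < t) :
    MeasurePreserving (fun z : ℝ × ℝ => (z.1 / t, t * z.2))
      (bMeasure.prod bMeasure) (bMeasure.prod bMeasure) := by
  simp only [div_eq_inv_mul]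
  exact (measurePreserving_mul_left_bMeasure (inv_pos.2 ht)).prod
    (measurePreserving_mul_left_bMeasure ht)

lemma setLIntegral_bMeasure_prod {s : Set (ℝ × ℝ)} (hs : MeasurableSet s)
    (hs₀ : s ⊆ Ioi 0 ×ˢ Ioi 0) {k : ℝ × ℝ → ℝ≥0∞} (hk : Measurable k) :
    ∫⁻ z in s, k z ∂(bMeasure.prod bMeasure) = ∫⁻ z in s, ENNReal.ofReal (z.1 * z.2)⁻¹ * k z := by
  have hinv : Measurable fun x : ℝ => ENNReal.ofReal x⁻¹ := by fun_prop
  rw [bMeasure_eq_withDensity, prod_withDensity hinv hinv,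
    setLIntegral_withDensity_eq_setLIntegral_mul _ (by fun_prop) hk hs, Measure.prod_restrict,
    ← Measure.volume_eq_prod, Measure.restrict_restrict_of_subset hs₀]
  refine setLIntegral_congr_fun hs fun z hz => ?_
  have hz₁ : 0 < z.1 := (hs₀ hz).1
  simp only [Pi.mul_apply, mul_inv, ENNReal.ofReal_mul (inv_nonneg.2 hz₁.le)]

theorem lintegral_sq_lintegral_dilation_le (ρ : Measure ℝ) [IsFiniteMeasure ρ]
    (hρ : ∀ᵐ t ∂ρ, 0 < t) {H : ℝ × ℝ → ℝ≥0∞} (hH : Measurable H) :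
    ∫⁻ z, (∫⁻ t, H (z.1 / t, t * z.2) ∂ρ) ^ 2 ∂(bMeasure.prod bMeasure) ≤
      ρ univ ^ 2 * ∫⁻ z, H z ^ 2 ∂(bMeasure.prod bMeasure) := by
  have hdil : Measurable fun q : (ℝ × ℝ) × ℝ => H (q.1.1 / q.2, q.2 * q.1.2) := by fun_prop
  calc ∫⁻ z, (∫⁻ t, H (z.1 / t, t * z.2) ∂ρ) ^ 2 ∂(bMeasure.prod bMeasure)
      ≤ ∫⁻ z, ρ univ * ∫⁻ t, H (z.1 / t, t * z.2) ^ 2 ∂ρ ∂(bMeasure.prod bMeasure) :=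
        lintegral_mono fun z => sq_lintegral_le_measure_univ_mul ρ (by fun_prop)
    _ = ρ univ * ∫⁻ t, ∫⁻ z, H (z.1 / t, t * z.2) ^ 2 ∂(bMeasure.prod bMeasure) ∂ρ := by
        rw [lintegral_const_mul' _ _ (measure_ne_top ρ univ),
          lintegral_lintegral_swap (hdil.pow_const 2).aemeasurable]
    _ = ρ univ * ∫⁻ _, ∫⁻ z, H z ^ 2 ∂(bMeasure.prod bMeasure) ∂ρ := by
        congr 1
        exact lintegral_congr_ae <| hρ.mono fun t ht =>
          (measurePreserving_dilation ht).lintegral_comp (hH.pow_const 2)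
    _ = ρ univ ^ 2 * ∫⁻ z, H z ^ 2 ∂(bMeasure.prod bMeasure) := by
        rw [lintegral_const]
        ring

noncomputable def powMeasure (ε : ℝ) : Measure ℝ :=
  (volume.restrict (Ioc 0 1)).withDensity fun t => ENNReal.ofReal (t ^ (ε - 1))

lemma powMeasure_univ {ε : ℝ} (hε : 0 < ε) : powMeasure ε univ = ENNReal.ofReal ε⁻¹ := by
  rw [powMeasure, withDensity_apply _ MeasurableSet.univ, Measure.restrict_univ,
    lintegral_Ioc_rpow_sub_one_s5 hε]

lemma ae_powMeasure_pos (ε : ℝ) : ∀ᵐ t ∂powMeasure ε, 0 < t :=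
  (withDensity_absolutelyContinuous _ _).ae_le <|
    (ae_restrict_mem measurableSet_Ioc).mono fun _ ht => ht.1

section Transport

variable (b₁ b₂ : ℝ) (f : ℝ → ℝ → ℝ)

noncomputable def transportMajorant (p : ℝ × ℝ) : ℝ≥0∞ :=
  ∫⁻ t in Ioc p.1 1, ‖p.1 ^ (-b₁) * p.2 ^ (-b₂) * (f (p.1 / t) (t * p.2) / t)‖ₑ

variable {b₁ b₂ f}

lemma transportMajorant_le_lintegral_powMeasure (hf : Measurable (Function.uncurry f))
    {p : ℝ × ℝ} (hp : p ∈ Ioc 0 1 ×ˢ Ioc 0 1) :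
    transportMajorant b₁ b₂ f p ≤
      ∫⁻ t, (Ioc 0 1 ×ˢ Ioc 0 1).indicator
        (fun q => ‖q.1 ^ (-b₁) * q.2 ^ (-b₂) * f q.1 q.2‖ₑ) (p.1 / t, t * p.2)
        ∂powMeasure (b₂ - b₁) := by
  obtain ⟨⟨hx₀, -⟩, ⟨hy₀, hy₁⟩⟩ := hp
  have hS : MeasurableSet (Ioc (0 : ℝ) 1 ×ˢ Ioc (0 : ℝ) 1) :=
    measurableSet_Ioc.prod measurableSet_Ioc
  have hg : Measurable fun t : ℝ => (Ioc 0 1 ×ˢ Ioc 0 1).indicator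
      (fun q : ℝ × ℝ => ‖q.1 ^ (-b₁) * q.2 ^ (-b₂) * f q.1 q.2‖ₑ) (p.1 / t, t * p.2) :=
    ((by fun_prop : Measurable _).indicator hS).comp (by fun_prop)
  rw [transportMajorant, powMeasure, lintegral_withDensity_eq_lintegral_mul _ (by fun_prop) hg]
  refine le_trans (le_of_eq (setLIntegral_congr_fun measurableSet_Ioc fun t ht => ?_))
    (lintegral_mono_set (Ioc_subset_Ioc_left hx₀.le))
  have ht₀ : 0 < t := hx₀.trans ht.1
  have hmem : (p.1 / t, t * p.2) ∈ Ioc (0 : ℝ) 1 ×ˢ Ioc (0 : ℝ) 1 :=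
    ⟨⟨div_pos hx₀ ht₀, (div_le_one ht₀).2 ht.1.le⟩, ⟨mul_pos ht₀ hy₀, mul_le_one₀ ht.2 hy₀.le hy₁⟩⟩
  rw [Pi.mul_apply, indicator_of_mem hmem, rpow_neg_mul_rpow_neg_mul_div hx₀ hy₀ ht₀, enorm_mul,
    Real.enorm_of_nonneg (Real.rpow_nonneg ht₀.le _)]

theorem lintegral_transportMajorant_sq_le (hb : b₁ < b₂) (hf : Measurable (Function.uncurry f)) :
    ∫⁻ p in Ioc 0 1 ×ˢ Ioc 0 1, ENNReal.ofReal (p.1 * p.2)⁻¹ * transportMajorant b₁ b₂ f p ^ 2 ≤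
      ENNReal.ofReal ((b₂ - b₁)⁻¹ ^ 2) * ∫⁻ p in Ioc 0 1 ×ˢ Ioc 0 1,
        ENNReal.ofReal (p.1 ^ (-(2 * b₁)) * p.2 ^ (-(2 * b₂)) * f p.1 p.2 ^ 2 / (p.1 * p.2)) := by
  set S : Set (ℝ × ℝ) := Ioc 0 1 ×ˢ Ioc 0 1
  have hS : MeasurableSet S := measurableSet_Ioc.prod measurableSet_Ioc
  have hS₀ : S ⊆ Ioi 0 ×ˢ Ioi 0 := prod_mono (fun _ hx => hx.1) (fun _ hy => hy.1)
  set h : ℝ × ℝ → ℝ≥0∞ := fun q => ‖q.1 ^ (-b₁) * q.2 ^ (-b₂) * f q.1 q.2‖ₑ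
  have hh : Measurable h := by fun_prop
  have hε := sub_pos.2 hb
  have : IsFiniteMeasure (powMeasure (b₂ - b₁)) := ⟨by simp [powMeasure_univ hε]⟩
  set Y : ℝ × ℝ → ℝ≥0∞ := fun p => ∫⁻ t, S.indicator h (p.1 / t, t * p.2) ∂powMeasure (b₂ - b₁)
  have hdil : Measurable fun q : (ℝ × ℝ) × ℝ => S.indicator h (q.1.1 / q.2, q.2 * q.1.2) :=
    (hh.indicator hS).comp (by fun_prop)
  have hY : Measurable Y := hdil.lintegral_prod_right'
  calc ∫⁻ p in S, ENNReal.ofReal (p.1 * p.2)⁻¹ * transportMajorant b₁ b₂ f p ^ 2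
      ≤ ∫⁻ p in S, ENNReal.ofReal (p.1 * p.2)⁻¹ * Y p ^ 2 :=
        setLIntegral_mono (by fun_prop) fun p hp => by
          gcongr
          exact transportMajorant_le_lintegral_powMeasure hf hp
    _ = ∫⁻ z in S, Y z ^ 2 ∂(bMeasure.prod bMeasure) :=
        (setLIntegral_bMeasure_prod hS hS₀ (hY.pow_const 2)).symm
    _ ≤ ∫⁻ z, Y z ^ 2 ∂(bMeasure.prod bMeasure) := setLIntegral_le_lintegral _ _
    _ ≤ powMeasure (b₂ - b₁) univ ^ 2 * ∫⁻ z, S.indicator h z ^ 2 ∂(bMeasure.prod bMeasure) :=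
        lintegral_sq_lintegral_dilation_le _ (ae_powMeasure_pos _) (hh.indicator hS)
    _ = ENNReal.ofReal ((b₂ - b₁)⁻¹ ^ 2) * ∫⁻ z in S, h z ^ 2 ∂(bMeasure.prod bMeasure) := by
        rw [powMeasure_univ hε, ← ENNReal.ofReal_pow (inv_nonneg.2 hε.le),
          ← lintegral_indicator hS]
        congr 2 with z
        by_cases hz : z ∈ S <;> simp [hz]
    _ = _ := by
        rw [setLIntegral_bMeasure_prod hS hS₀ (hh.pow_const 2)]
        congr 1
        exact setLIntegral_congr_fun hS fun p hp =>
          (ofReal_rpow_mul_rpow_mul_sq_div hp.1.1 hp.2.1 _ _ _).symm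

lemma ae_integrableOn_of_transportMajorant (hf : Measurable (Function.uncurry f))
    (hfin : ∫⁻ p in Ioc 0 1 ×ˢ Ioc 0 1,
      ENNReal.ofReal (p.1 * p.2)⁻¹ * transportMajorant b₁ b₂ f p ^ 2 ≠ ∞) :
    ∀ᵐ p ∂(volume.restrict (Ioc (0 : ℝ) 1 ×ˢ Ioc (0 : ℝ) 1)),
      IntegrableOn (fun t => f (p.1 / t) (t * p.2) / t) (Ioc p.1 1) := by
  have hW : Measurable (transportMajorant b₁ b₂ f) :=
    measurable_setLIntegral_Ioc (by fun_prop) measurable_fst 1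
  filter_upwards [ae_lt_top (by fun_prop) hfin,
    ae_restrict_mem (measurableSet_Ioc.prod measurableSet_Ioc)] with p hp ⟨⟨hx, _⟩, ⟨hy, _⟩⟩
  have hWp : transportMajorant b₁ b₂ f p ≠ ∞ := by
    intro hWp
    simp [hWp, hx, hy] at hp
  have ha : p.1 ^ (-b₁) * p.2 ^ (-b₂) ≠ 0 := by positivity
  exact (integrable_const_mul_iff (isUnit_iff_ne_zero.2 ha) _).1
    ⟨(by fun_prop : Measurable _).aestronglyMeasurable, hWp.lt_top⟩

lemma ofReal_transport_sq_le {p : ℝ × ℝ} (hp : p ∈ Ioc 0 1 ×ˢ Ioc 0 1) :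
    ENNReal.ofReal (p.1 ^ (-(2 * b₁)) * p.2 ^ (-(2 * b₂)) *
        (∫ t in Ioc p.1 1, f (p.1 / t) (t * p.2) / t) ^ 2 / (p.1 * p.2)) ≤
      ENNReal.ofReal (p.1 * p.2)⁻¹ * transportMajorant b₁ b₂ f p ^ 2 := by
  rw [ofReal_rpow_mul_rpow_mul_sq_div hp.1.1 hp.2.1, ← integral_const_mul]
  gcongr
  exact enorm_integral_le_lintegral_enorm _

end Transport

/-- Transport of weights from spacelike infinity to null infinity: for `b₁ < b₂` and `f` with
finite weighted norm `J` on `(0,1]²`, the solution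
`u(ρ₁,ρ₂) = ∫_{ρ₁}¹ f(ρ₁/t, tρ₂) dt/t` of `(ρ₁∂_{ρ₁} - ρ₂∂_{ρ₂}) u = -f` supported in `ρ₁ ≤ 1`
is defined by an a.e. absolutely convergent integral and satisfies
`∫∫ ρ₁^{-2b₁} ρ₂^{-2b₂} |u|² (dρ₁/ρ₁)(dρ₂/ρ₂) ≤ (b₂-b₁)⁻² J`. -/
theorem transport_weight_estimate (b₁ b₂ : ℝ) (hb : b₁ < b₂)
    (f : ℝ → ℝ → ℝ) (hf : Measurable (Function.uncurry f))
    (hJ : IntegrableOn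
      (fun p : ℝ × ℝ =>
        p.1 ^ (-(2 * b₁)) * p.2 ^ (-(2 * b₂)) * (f p.1 p.2) ^ 2 / (p.1 * p.2))
      (Ioc 0 1 ×ˢ Ioc 0 1)) :
    (∀ᵐ p ∂(volume.restrict (Ioc (0 : ℝ) 1 ×ˢ Ioc (0 : ℝ) 1)),
      IntegrableOn (fun t => f (p.1 / t) (t * p.2) / t) (Ioc p.1 1)) ∧
    IntegrableOn
      (fun p : ℝ × ℝ =>
        p.1 ^ (-(2 * b₁)) * p.2 ^ (-(2 * b₂)) *
          (∫ t in Ioc p.1 1, f (p.1 / t) (t * p.2) / t) ^ 2 / (p.1 * p.2))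
      (Ioc 0 1 ×ˢ Ioc 0 1) ∧
    (∫ p in (Ioc (0 : ℝ) 1 ×ˢ Ioc (0 : ℝ) 1),
        p.1 ^ (-(2 * b₁)) * p.2 ^ (-(2 * b₂)) *
          (∫ t in Ioc p.1 1, f (p.1 / t) (t * p.2) / t) ^ 2 / (p.1 * p.2)) ≤
      ((b₂ - b₁)⁻¹) ^ 2 *
        (∫ p in (Ioc (0 : ℝ) 1 ×ˢ Ioc (0 : ℝ) 1),
          p.1 ^ (-(2 * b₁)) * p.2 ^ (-(2 * b₂)) * (f p.1 p.2) ^ 2 / (p.1 * p.2)) := by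
  have hS : MeasurableSet (Ioc (0 : ℝ) 1 ×ˢ Ioc (0 : ℝ) 1) :=
    measurableSet_Ioc.prod measurableSet_Ioc
  have hW := lintegral_transportMajorant_sq_le hb hf
  have hfin := (hW.trans_lt (ENNReal.mul_lt_top ENNReal.ofReal_lt_top hJ.lintegral_lt_top)).ne
  have hu : Measurable fun p : ℝ × ℝ => ∫ t in Ioc p.1 1, f (p.1 / t) (t * p.2) / t :=
    (stronglyMeasurable_setIntegral_Ioc (by fun_prop : Measurable _).stronglyMeasurable
      measurable_fst 1).measurable
  have hnonneg : ∀ z : ℝ × ℝ → ℝ, 0 ≤ᵐ[volume.restrict (Ioc (0 : ℝ) 1 ×ˢ Ioc (0 : ℝ) 1)]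
      fun p => p.1 ^ (-(2 * b₁)) * p.2 ^ (-(2 * b₂)) * z p ^ 2 / (p.1 * p.2) := fun z =>
    (ae_restrict_mem hS).mono fun p ⟨⟨hx, _⟩, ⟨hy, _⟩⟩ => by positivity
  exact ⟨ae_integrableOn_of_transportMajorant hf hfin,
    integrable_and_integral_le_of_lintegral_le (by fun_prop : Measurable _).aestronglyMeasurable
      (hnonneg _) hJ (hnonneg fun p => f p.1 p.2) (sq_nonneg _)
      ((setLIntegral_mono' hS fun p hp => ofReal_transport_sq_le hp).trans hW)⟩
end

section
/- Let E₀ be an index set and c₀ > 0 such that Im z ≤ −c₀ for every (z,j) ∈ E₀, and set c = min(1, c₀). Define E'_{I,k}, Ē_{I,k}, E_{I,k} by the recursion described in the context (starting from the empty sets), and let E'_I, Ē_I, E_I denote their unions over k. Then E'_I, Ē_I, and E_I are index sets; in particular, for every N ∈ ℝ each of the sets {(z,j) ∈ E_I : Im z > −N}, {(z,j) ∈ Ē_I : Im z > −N}, {(z,j) ∈ E'_I : Im z > −N} is finite. Moreover: every (z,j) ∈ E'_I satisfies Im z ≤ −c; every (z,j) ∈ Ē_I with Im z > −c equals (0,0);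 and every (z,j) ∈ E_I with Im z > −c equals (0,0) or (0,1). -/
/-- An index set: a discrete subset of `ℂ × ℕ` which is downward closed in the second entry,
has only finitely many elements with `Im z > -C` for every `C`, and is closed under
`z ↦ z - i`. -/
def IsIndexSet (E : Set (ℂ × ℕ)) : Prop :=
  (∀ z : ℂ, ∀ j j' : ℕ, (z, j) ∈ E → j' ≤ j → (z, j') ∈ E) ∧
  (∀ C : ℝ, {p : ℂ × ℕ | p ∈ E ∧ -C < p.1.im}.Finite) ∧
  (∀ z : ℂ, ∀ j : ℕ, (z, j) ∈ E → (z - Complex.I, j) ∈ E)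

/-- The extended union `E₁ ∪̄ E₂`. -/
def extUnion (E₁ E₂ : Set (ℂ × ℕ)) : Set (ℂ × ℕ) :=
  E₁ ∪ E₂ ∪
    {p : ℂ × ℕ | ∃ j₁ j₂ : ℕ, (p.1, j₁) ∈ E₁ ∧ (p.1, j₂) ∈ E₂ ∧ p.2 ≤ j₁ + j₂ + 1}

/-- The sum `E₁ + E₂ = {(z₁+z₂, j₁+j₂)}`. -/
def idxSum (E₁ E₂ : Set (ℂ × ℕ)) : Set (ℂ × ℕ) :=
  {p : ℂ × ℕ | ∃ z₁ : ℂ, ∃ j₁ : ℕ, ∃ z₂ : ℂ, ∃ j₂ : ℕ,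
    (z₁, j₁) ∈ E₁ ∧ (z₂, j₂) ∈ E₂ ∧ p = (z₁ + z₂, j₁ + j₂)}

/-- `idxSMul j E` is the `j`-fold sum `E + ⋯ + E` (for `j ≥ 1`). -/
def idxSMul : ℕ → Set (ℂ × ℕ) → Set (ℂ × ℕ)
  | 0, _ => {((0 : ℂ), (0 : ℕ))}
  | n + 1, E => idxSum E (idxSMul n E)

/-- `E - i = {(z - i, j) : (z,j) ∈ E}`. -/
def idxMinusI (E : Set (ℂ × ℕ)) : Set (ℂ × ℕ) :=
  (fun p : ℂ × ℕ => (p.1 - Complex.I, p.2)) '' E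

/-- `F + i = {(z + i, j) : (z,j) ∈ F}`. -/
def idxPlusI (E : Set (ℂ × ℕ)) : Set (ℂ × ℕ) :=
  (fun p : ℂ × ℕ => (p.1 + Complex.I, p.2)) '' E

/-- The index set denoted `0`, i.e. `{(-i n, 0) : n ∈ ℕ}`. -/
def idxZero : Set (ℂ × ℕ) :=
  {p : ℂ × ℕ | ∃ n : ℕ, p = (-(n : ℂ) * Complex.I, 0)}

/-- The recursion producing the index sets at null infinity: the value at `k` is the triple
`(E'_{I,k}, Ē_{I,k}, E_{I,k})`, with
`E'_{I,k+1} = E₀ ∪̄ (2E_{I,k} - i)`,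
`Ē_{I,k+1} = 0 ∪ (E₀ ∪̄ ((Ē_{I,k} + E'_{I,k}) ∪ (2E_{I,k} - i)))`,
`E_{I,k+1} = (0 ∪̄ (E₀ ∪̄ ((E_{I,k} + E'_{I,k}) ∪ (2Ē_{I,k})))) ∪ ⋃_{j≥1} (j(E_{I,k}-i)+i)`. -/
def scriRec (E₀ : Set (ℂ × ℕ)) : ℕ → Set (ℂ × ℕ) × Set (ℂ × ℕ) × Set (ℂ × ℕ)
  | 0 => (∅, ∅, ∅)
  | k + 1 =>
      (extUnion E₀ (idxMinusI (idxSMul 2 (scriRec E₀ k).2.2)),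
       idxZero ∪ extUnion E₀
         (idxSum (scriRec E₀ k).2.1 (scriRec E₀ k).1 ∪
           idxMinusI (idxSMul 2 (scriRec E₀ k).2.2)),
       extUnion idxZero (extUnion E₀
           (idxSum (scriRec E₀ k).2.2 (scriRec E₀ k).1 ∪ idxSMul 2 (scriRec E₀ k).2.1)) ∪
         ⋃ (j : ℕ) (_ : 1 ≤ j), idxPlusI (idxSMul j (idxMinusI (scriRec E₀ k).2.2)))


/-!
Each operation of the recursion (extended union, sum, shift by `-i`) preserves closure under
lowering the log power and under `z ↦ z - i`, hence so does every stage and every union.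
Tracking imaginary parts, `E'_{I,k}` stays below `-c` and `Ē_{I,k}`, `E_{I,k}` below `0`; above
`-c` only the point `(0,0)` of the index set `0` survives, and in `E_{I,k}` also the point `(0,1)`
of `0 ∪̄ 2Ē_{I,k}`.

For finiteness, all exponents are sums of `-i` and exponents of `E₀`, each with `Im ≤ -c`, so
only finitely many lie above any line `Im z = s`. The log powers above `s` are bounded uniformly
in `k` by descending induction on `s` in steps of `c`: a summand with `Im ≤ -c`, or a shift by
`-i`, pushes the other summands above `s + c`, and what remains at level `s` is bounded first for
`E'_{I,k}`, then for `Ē_{I,k}`, then for `E_{I,k}` (which contains `E_{I,k-1}`).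
-/

open Set Pointwise Complex

lemma mem_extUnion {S T : Set (ℂ × ℕ)} {p : ℂ × ℕ} :
    p ∈ extUnion S T ↔ p ∈ S ∨ p ∈ T ∨
      ∃ j₁ j₂ : ℕ, (p.1, j₁) ∈ S ∧ (p.1, j₂) ∈ T ∧ p.2 ≤ j₁ + j₂ + 1 := by
  rw [extUnion, mem_union, mem_union, or_assoc]; rfl

lemma extUnion_mono {S S' T T' : Set (ℂ × ℕ)} (hS : S ⊆ S') (hT : T ⊆ T') :
    extUnion S T ⊆ extUnion S' T' := by
  intro p hp
  rcases mem_extUnion.1 hp with h | h | ⟨j₁, j₂, h₁, h₂, hj⟩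
  exacts [mem_extUnion.2 (.inl (hS h)), mem_extUnion.2 (.inr (.inl (hT h))),
    mem_extUnion.2 (.inr (.inr ⟨j₁, j₂, hS h₁, hT h₂, hj⟩))]

lemma extUnion_empty_left (T : Set (ℂ × ℕ)) : extUnion ∅ T = T := by
  ext p; simp [mem_extUnion]

lemma extUnion_zero_zero_subset :
    extUnion {(0 : ℂ × ℕ)} {0} ⊆ {0, ((0 : ℂ), 1)} := by
  rintro ⟨z, j⟩ hp
  simp only [mem_extUnion, mem_singleton_iff, Prod.ext_iff, Prod.fst_zero, Prod.snd_zero] at hp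
  rcases hp with hp | hp | ⟨_, _, ⟨rfl, rfl⟩, ⟨-, rfl⟩, hj⟩
  · exact .inl (Prod.ext_iff.2 hp)
  · exact .inl (Prod.ext_iff.2 hp)
  · rcases Nat.le_one_iff_eq_zero_or_eq_one.1 hj with rfl | rfl
    exacts [.inl rfl, .inr rfl]

lemma idxSum_eq_add (S T : Set (ℂ × ℕ)) : idxSum S T = S + T := by
  ext p
  constructor
  · rintro ⟨z₁, j₁, z₂, j₂, h₁, h₂, rfl⟩
    exact ⟨_, h₁, _, h₂, rfl⟩
  · rintro ⟨⟨z₁, j₁⟩, h₁, ⟨z₂, j₂⟩, h₂, rfl⟩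
    exact ⟨z₁, j₁, z₂, j₂, h₁, h₂, rfl⟩

lemma idxSMul_eq_nsmul (n : ℕ) (S : Set (ℂ × ℕ)) : idxSMul n S = n • S := by
  induction n with
  | zero => rfl
  | succ n ih => rw [idxSMul, ih, idxSum_eq_add, succ_nsmul']

def negI : ℂ × ℕ := (-I, 0)

lemma idxMinusI_eq_add (S : Set (ℂ × ℕ)) : idxMinusI S = S + {negI} := by
  rw [add_singleton, idxMinusI]
  congr 1

lemma idxPlusI_eq_add (S : Set (ℂ × ℕ)) : idxPlusI S = S + {((I : ℂ), (0 : ℕ))} := by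
  rw [add_singleton, idxPlusI]
  congr 1

lemma biUnion_idxPlusI_idxSMul (E : Set (ℂ × ℕ)) :
    ⋃ (j : ℕ) (_ : 1 ≤ j), idxPlusI (idxSMul j (idxMinusI E)) = ⋃ m : ℕ, E + m • (E + {negI}) := by
  have hterm (m : ℕ) : idxPlusI (idxSMul (m + 1) (idxMinusI E)) = E + m • (E + {negI}) := by
    have hcancel : ({negI} + {((I : ℂ), (0 : ℕ))} : Set (ℂ × ℕ)) = 0 := by
      rw [singleton_add_singleton, ← singleton_zero]; simp [negI]
    rw [idxPlusI_eq_add, idxSMul_eq_nsmul, idxMinusI_eq_add, succ_nsmul', add_right_comm,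
      add_assoc E, hcancel, add_zero]
  ext p
  simp only [mem_iUnion, exists_prop]
  constructor
  · rintro ⟨j, hj, hp⟩
    obtain ⟨m, rfl⟩ := Nat.exists_eq_add_of_le' hj
    exact ⟨m, hterm m ▸ hp⟩
  · rintro ⟨m, hp⟩
    exact ⟨m + 1, m.succ_pos, (hterm m).symm ▸ hp⟩

section scriRec

variable (E₀ : Set (ℂ × ℕ)) (k : ℕ)

lemma scriRec_zero : scriRec E₀ 0 = (∅, ∅, ∅) := rfl

lemma scriRec_succ_fst :
    (scriRec E₀ (k + 1)).1 = extUnion E₀ (2 • (scriRec E₀ k).2.2 + {negI}) := by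
  simp only [scriRec, idxMinusI_eq_add, idxSMul_eq_nsmul]

lemma scriRec_succ_snd_fst :
    (scriRec E₀ (k + 1)).2.1 = idxZero ∪ extUnion E₀
      ((scriRec E₀ k).2.1 + (scriRec E₀ k).1 ∪ (2 • (scriRec E₀ k).2.2 + {negI})) := by
  simp only [scriRec, idxMinusI_eq_add, idxSMul_eq_nsmul, idxSum_eq_add]

lemma scriRec_succ_snd_snd :
    (scriRec E₀ (k + 1)).2.2 =
      extUnion idxZero (extUnion E₀
        ((scriRec E₀ k).2.2 + (scriRec E₀ k).1 ∪ 2 • (scriRec E₀ k).2.1)) ∪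
      ⋃ m : ℕ, (scriRec E₀ k).2.2 + m • ((scriRec E₀ k).2.2 + {negI}) := by
  simp only [scriRec, idxSum_eq_add]
  rw [biUnion_idxPlusI_idxSMul, idxSMul_eq_nsmul]

end scriRec

lemma idxZero_eq_range : idxZero = range (fun n : ℕ => n • negI) := by
  ext p
  simp only [idxZero, mem_ofPred_eq, mem_range, negI, Prod.smul_mk, nsmul_eq_mul, smul_zero,
    mul_neg, neg_mul, eq_comm]

def LogClosed (S : Set (ℂ × ℕ)) : Prop :=
  ∀ z : ℂ, ∀ j j' : ℕ, (z, j) ∈ S → j' ≤ j → (z, j') ∈ S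

def ShiftClosed (S : Set (ℂ × ℕ)) : Prop := S + {negI} ⊆ S

namespace LogClosed

variable {S T : Set (ℂ × ℕ)}

lemma of_snd_eq_zero (h : ∀ p ∈ S, p.2 = 0) : LogClosed S := by
  intro z j j' hp hj
  obtain rfl : j = 0 := h _ hp
  rwa [Nat.le_zero.1 hj]

lemma union (hS : LogClosed S) (hT : LogClosed T) : LogClosed (S ∪ T) := by
  rintro z j j' (h | h) hj
  exacts [.inl (hS z j j' h hj), .inr (hT z j j' h hj)]

lemma iUnion {ι : Sort*} {S : ι → Set (ℂ × ℕ)} (h : ∀ i, LogClosed (S i)) :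
    LogClosed (⋃ i, S i) := by
  intro z j j' hp hj
  obtain ⟨i, hi⟩ := mem_iUnion.1 hp
  exact mem_iUnion.2 ⟨i, h i z j j' hi hj⟩

lemma extUnion (hS : LogClosed S) (hT : LogClosed T) : LogClosed (extUnion S T) := by
  intro z j j' hp hj
  rcases mem_extUnion.1 hp with h | h | ⟨j₁, j₂, h₁, h₂, hle⟩
  exacts [mem_extUnion.2 (.inl (hS z j j' h hj)), mem_extUnion.2 (.inr (.inl (hT z j j' h hj))),
    mem_extUnion.2 (.inr (.inr ⟨j₁, j₂, h₁, h₂, hj.trans hle⟩))]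

lemma add (hS : LogClosed S) (hT : LogClosed T) : LogClosed (S + T) := by
  rintro _ _ j' ⟨⟨z₁, j₁⟩, h₁, ⟨z₂, j₂⟩, h₂, hp⟩ hj
  simp only [Prod.mk_add_mk, Prod.ext_iff] at hp
  obtain ⟨rfl, rfl⟩ := hp
  refine ⟨(z₁, min j' j₁), hS z₁ j₁ _ h₁ (min_le_right _ _),
    (z₂, j' - min j' j₁), hT z₂ j₂ _ h₂ (by omega), ?_⟩
  simp only [Prod.mk_add_mk, Prod.mk.injEq, true_and]
  omega

lemma nsmul (hS : LogClosed S) (n : ℕ) : LogClosed (n • S) := by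
  induction n with
  | zero => exact of_snd_eq_zero (by simp)
  | succ n ih => rw [succ_nsmul]; exact ih.add hS

lemma idxZero : LogClosed idxZero :=
  of_snd_eq_zero (by rw [idxZero_eq_range]; rintro _ ⟨n, rfl⟩; simp [negI])

lemma add_negI (hS : LogClosed S) : LogClosed (S + {negI}) :=
  hS.add (of_snd_eq_zero (by simp [negI]))

end LogClosed

namespace ShiftClosed

variable {S T : Set (ℂ × ℕ)}

lemma union (hS : ShiftClosed S) (hT : ShiftClosed T) : ShiftClosed (S ∪ T) := by
  rw [ShiftClosed, union_add]; exact union_subset_union hS hT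

lemma iUnion {ι : Sort*} {S : ι → Set (ℂ × ℕ)} (h : ∀ i, ShiftClosed (S i)) :
    ShiftClosed (⋃ i, S i) := by
  rw [ShiftClosed, iUnion_add]; exact iUnion_mono h

lemma add_left (hS : ShiftClosed S) : ShiftClosed (S + T) := by
  rw [ShiftClosed, add_right_comm]; exact add_subset_add_right hS

lemma add_right (hT : ShiftClosed T) : ShiftClosed (S + T) := by
  rw [add_comm]; exact hT.add_left

lemma nsmul (hS : ShiftClosed S) {n : ℕ} (hn : n ≠ 0) : ShiftClosed (n • S) := by
  obtain ⟨m, rfl⟩ := Nat.exists_eq_succ_of_ne_zero hn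
  rw [succ_nsmul]; exact hS.add_right

lemma add_mem (hS : ShiftClosed S) {p : ℂ × ℕ} (hp : p ∈ S) : p + negI ∈ S :=
  hS (add_mem_add hp rfl)

lemma extUnion (hS : ShiftClosed S) (hT : ShiftClosed T) : ShiftClosed (extUnion S T) := by
  rintro _ ⟨p, hp, _, rfl, rfl⟩
  rcases mem_extUnion.1 hp with h | h | ⟨j₁, j₂, h₁, h₂, hle⟩
  · exact mem_extUnion.2 (.inl (hS.add_mem h))
  · exact mem_extUnion.2 (.inr (.inl (hT.add_mem h)))
  · refine mem_extUnion.2 (.inr (.inr ⟨j₁, j₂, ?_, ?_, by simpa [negI] using hle⟩))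
    · simpa [negI] using hS.add_mem h₁
    · simpa [negI] using hT.add_mem h₂

lemma idxZero : ShiftClosed idxZero := by
  rw [ShiftClosed, idxZero_eq_range]
  rintro _ ⟨_, ⟨n, rfl⟩, _, rfl, rfl⟩
  exact ⟨n + 1, succ_nsmul negI n⟩

end ShiftClosed

lemma shiftClosed_iff {S : Set (ℂ × ℕ)} :
    ShiftClosed S ↔ ∀ z : ℂ, ∀ j : ℕ, (z, j) ∈ S → (z - I, j) ∈ S := by
  have hshift (z : ℂ) (j : ℕ) : (z, j) + negI = (z - I, j) := by simp [negI, sub_eq_add_neg]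
  refine ⟨fun h z j hz => hshift z j ▸ h.add_mem hz, fun h => ?_⟩
  rintro _ ⟨⟨z, j⟩, hz, _, rfl, rfl⟩
  change (z, j) + negI ∈ S
  exact hshift z j ▸ h z j hz

section Closure

variable {E₀ : Set (ℂ × ℕ)}

lemma scriRec_logClosed (h₀ : LogClosed E₀) (k : ℕ) :
    LogClosed (scriRec E₀ k).1 ∧ LogClosed (scriRec E₀ k).2.1 ∧ LogClosed (scriRec E₀ k).2.2 := by
  induction k with
  | zero =>
    have hempty : LogClosed ∅ := fun _ _ _ h => h.elim
    exact ⟨hempty, hempty, hempty⟩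
  | succ k ih =>
    obtain ⟨h', hbar, h⟩ := ih
    rw [scriRec_succ_fst, scriRec_succ_snd_fst, scriRec_succ_snd_snd]
    have h2 : LogClosed (2 • (scriRec E₀ k).2.2 + {negI}) := (h.nsmul 2).add_negI
    exact ⟨h₀.extUnion h2, LogClosed.idxZero.union (h₀.extUnion ((hbar.add h').union h2)),
      (LogClosed.idxZero.extUnion (h₀.extUnion ((h.add h').union (hbar.nsmul 2)))).union
        (.iUnion fun m => h.add (h.add_negI.nsmul m))⟩

lemma scriRec_shiftClosed (h₀ : ShiftClosed E₀) (k : ℕ) :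
    ShiftClosed (scriRec E₀ k).1 ∧ ShiftClosed (scriRec E₀ k).2.1 ∧
      ShiftClosed (scriRec E₀ k).2.2 := by
  induction k with
  | zero =>
    have hempty : ShiftClosed ∅ := by simp [ShiftClosed]
    exact ⟨hempty, hempty, hempty⟩
  | succ k ih =>
    obtain ⟨-, hbar, h⟩ := ih
    rw [scriRec_succ_fst, scriRec_succ_snd_fst, scriRec_succ_snd_snd]
    have h2 : ShiftClosed (2 • (scriRec E₀ k).2.2 + {negI}) := (h.nsmul two_ne_zero).add_left
    exact ⟨h₀.extUnion h2, ShiftClosed.idxZero.union (h₀.extUnion (hbar.add_left.union h2)),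
      (ShiftClosed.idxZero.extUnion (h₀.extUnion (h.add_left.union (hbar.nsmul two_ne_zero)))).union
        (.iUnion fun _ => h.add_left)⟩

end Closure

def imLE (a : ℝ) : Set (ℂ × ℕ) := Prod.fst ⁻¹' {z | z.im ≤ a}

def imGT (s : ℝ) : Set (ℂ × ℕ) := Prod.fst ⁻¹' {z | s < z.im}

section ImaginaryPart

variable {S T : Set (ℂ × ℕ)} {a b s : ℝ}

lemma imLE_mono (h : a ≤ b) : imLE a ⊆ imLE b := fun _ hp => le_trans hp h

lemma imGT_anti (h : a ≤ b) : imGT b ⊆ imGT a := fun _ hp => lt_of_le_of_lt h hp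

lemma add_subset_imLE (hS : S ⊆ imLE a) (hT : T ⊆ imLE b) : S + T ⊆ imLE (a + b) := by
  rintro _ ⟨p, hp, q, hq, rfl⟩
  simpa [imLE] using add_le_add (hS hp) (hT hq)

lemma nsmul_subset_imLE (hS : S ⊆ imLE a) (n : ℕ) : n • S ⊆ imLE (n * a) := by
  induction n with
  | zero => simp [imLE]
  | succ n ih => simpa [succ_nsmul, add_mul] using add_subset_imLE ih hS

lemma singleton_negI_subset_imLE : {negI} ⊆ imLE (-1) := by simp [imLE, negI]

lemma extUnion_subset_fst_preimage {V : Set ℂ} (hS : S ⊆ Prod.fst ⁻¹' V)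
    (hT : T ⊆ Prod.fst ⁻¹' V) : extUnion S T ⊆ Prod.fst ⁻¹' V := by
  intro p hp
  rcases mem_extUnion.1 hp with h | h | ⟨j₁, -, h₁, -, -⟩
  exacts [hS h, hT h, @hS (p.1, j₁) h₁]

lemma idxZero_subset_imLE : idxZero ⊆ imLE 0 := by
  rw [idxZero_eq_range]; rintro _ ⟨n, rfl⟩; simp [imLE, negI]

lemma nsmul_add_negI_subset_imLE (hS : S ⊆ imLE 0) (n : ℕ) : n • S + {negI} ⊆ imLE (-1) := by
  simpa using add_subset_imLE (nsmul_subset_imLE hS n) singleton_negI_subset_imLE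

lemma add_nsmul_add_negI_subset_imLE (hS : S ⊆ imLE 0) (m : ℕ) :
    S + m • (S + {negI}) ⊆ imLE (-m) := by
  simpa using add_subset_imLE hS
    (nsmul_subset_imLE (add_subset_imLE hS singleton_negI_subset_imLE) m)

lemma inter_imGT_eq_empty (hS : S ⊆ imLE a) (h : a ≤ s) : S ∩ imGT s = ∅ :=
  eq_empty_of_forall_notMem fun _ hp => (hp.2.trans_le ((hS hp.1).trans h)).false

lemma extUnion_inter_imGT : extUnion S T ∩ imGT s = extUnion (S ∩ imGT s) (T ∩ imGT s) := by
  ext p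
  simp only [mem_inter_iff, mem_extUnion, imGT, mem_preimage]
  tauto

lemma add_inter_imGT_subset (hS : S ⊆ imLE a) (hT : T ⊆ imLE b) :
    (S + T) ∩ imGT s ⊆ (S ∩ imGT (s - b)) + (T ∩ imGT (s - a)) := by
  rintro _ ⟨⟨p, hp, q, hq, rfl⟩, hs⟩
  have hp' : p.1.im ≤ a := hS hp
  have hq' : q.1.im ≤ b := hT hq
  have hs' : s < p.1.im + q.1.im := by simpa [imGT] using hs
  exact ⟨p, ⟨hp, show s - b < p.1.im by linarith⟩, q, ⟨hq, show s - a < q.1.im by linarith⟩, rfl⟩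

lemma nsmul_inter_imGT_subset (hS : S ⊆ imLE 0) (n : ℕ) : (n • S) ∩ imGT s ⊆ n • (S ∩ imGT s) := by
  induction n with
  | zero => exact inter_subset_left
  | succ n ih =>
    rw [succ_nsmul, succ_nsmul]
    refine (add_inter_imGT_subset (nsmul_subset_imLE hS n) hS).trans (add_subset_add ?_ ?_)
    · simpa using ih
    · simp

lemma add_negI_inter_imGT : (S + {negI}) ∩ imGT s ⊆ (S ∩ imGT (s + 1)) + {negI} := by
  rintro _ ⟨⟨p, hp, _, rfl, rfl⟩, hs⟩
  refine ⟨p, ⟨hp, ?_⟩, negI, rfl, rfl⟩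
  have : s < p.1.im - 1 := by simpa [imGT, negI, sub_eq_add_neg] using hs
  simp only [imGT, mem_preimage, mem_ofPred_eq]
  linarith

lemma idxZero_inter_imGT_subset (hs : -1 ≤ s) : idxZero ∩ imGT s ⊆ {0} := by
  rw [idxZero_eq_range]
  rintro _ ⟨⟨n, rfl⟩, hn⟩
  replace hn : s < -n := by simpa [imGT, negI] using hn
  obtain rfl : n = 0 := by
    by_contra h
    have : (1 : ℝ) ≤ n := Nat.one_le_cast.2 (Nat.pos_of_ne_zero h)
    linarith
  simp

end ImaginaryPart

section Leading

variable {E₀ : Set (ℂ × ℕ)} {c : ℝ}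

lemma scriRec_subset_imLE (hc : 0 ≤ c) (hc1 : c ≤ 1) (hE₀ : E₀ ⊆ imLE (-c)) (k : ℕ) :
    (scriRec E₀ k).1 ⊆ imLE (-c) ∧ (scriRec E₀ k).2.1 ⊆ imLE 0 ∧ (scriRec E₀ k).2.2 ⊆ imLE 0 := by
  induction k with
  | zero => simp [scriRec_zero]
  | succ k ih =>
    obtain ⟨h', hbar, h⟩ := ih
    rw [scriRec_succ_fst, scriRec_succ_snd_fst, scriRec_succ_snd_snd]
    have hE₀' : E₀ ⊆ imLE 0 := hE₀.trans (imLE_mono (by linarith))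
    have h2 : 2 • (scriRec E₀ k).2.2 + {negI} ⊆ imLE (-c) :=
      (nsmul_add_negI_subset_imLE h 2).trans (imLE_mono (by linarith))
    have hsum : (scriRec E₀ k).2.1 + (scriRec E₀ k).1 ⊆ imLE 0 :=
      (add_subset_imLE hbar h').trans (imLE_mono (by linarith))
    refine ⟨extUnion_subset_fst_preimage hE₀ h2,
      union_subset idxZero_subset_imLE (extUnion_subset_fst_preimage hE₀' (union_subset hsum
        (h2.trans (imLE_mono (by linarith))))),
      union_subset (extUnion_subset_fst_preimage idxZero_subset_imLE
          (extUnion_subset_fst_preimage hE₀' ?_))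
        (iUnion_subset fun m => (add_nsmul_add_negI_subset_imLE h m).trans (imLE_mono ?_))⟩
    · exact union_subset ((add_subset_imLE h h').trans (imLE_mono (by linarith)))
        ((nsmul_subset_imLE hbar 2).trans (imLE_mono (by simp)))
    · simp

lemma scriRec_snd_fst_inter_imGT_subset (hc : 0 ≤ c) (hc1 : c ≤ 1) (hE₀ : E₀ ⊆ imLE (-c))
    (k : ℕ) : (scriRec E₀ k).2.1 ∩ imGT (-c) ⊆ {0} := by
  cases k with
  | zero => simp [scriRec_zero]
  | succ k =>
    obtain ⟨h', hbar, h⟩ := scriRec_subset_imLE hc hc1 hE₀ k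
    have hrest : extUnion E₀ ((scriRec E₀ k).2.1 + (scriRec E₀ k).1 ∪
        (2 • (scriRec E₀ k).2.2 + {negI})) ⊆ imLE (-c) :=
      extUnion_subset_fst_preimage hE₀
        (union_subset ((add_subset_imLE hbar h').trans (imLE_mono (by simp)))
          ((nsmul_add_negI_subset_imLE h 2).trans (imLE_mono (by linarith))))
    rw [scriRec_succ_snd_fst, union_inter_distrib_right, inter_imGT_eq_empty hrest le_rfl,
      union_empty]
    exact idxZero_inter_imGT_subset (by linarith)

lemma scriRec_snd_snd_inter_imGT_subset (hc : 0 ≤ c) (hc1 : c ≤ 1) (hE₀ : E₀ ⊆ imLE (-c))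
    (k : ℕ) : (scriRec E₀ k).2.2 ∩ imGT (-c) ⊆ {0, ((0 : ℂ), 1)} := by
  induction k with
  | zero => simp [scriRec_zero]
  | succ k ih =>
    obtain ⟨h', hbar, h⟩ := scriRec_subset_imLE hc hc1 hE₀ k
    have hinner : extUnion E₀ ((scriRec E₀ k).2.2 + (scriRec E₀ k).1 ∪ 2 • (scriRec E₀ k).2.1) ∩
        imGT (-c) ⊆ {0} := by
      rw [extUnion_inter_imGT, union_inter_distrib_right, inter_imGT_eq_empty hE₀ le_rfl,
        inter_imGT_eq_empty (add_subset_imLE h h') (by simp), empty_union, extUnion_empty_left]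
      calc _ ⊆ 2 • ((scriRec E₀ k).2.1 ∩ imGT (-c)) := nsmul_inter_imGT_subset hbar 2
        _ ⊆ 2 • {0} := nsmul_subset_nsmul_left (scriRec_snd_fst_inter_imGT_subset hc hc1 hE₀ k)
        _ = {0} := by simp
    rw [scriRec_succ_snd_snd, union_inter_distrib_right, extUnion_inter_imGT, iUnion_inter]
    refine union_subset ((extUnion_mono (idxZero_inter_imGT_subset (by linarith)) hinner).trans
      extUnion_zero_zero_subset) (iUnion_subset fun m => ?_)
    cases m with
    | zero => simpa using ih
    | succ m =>
      rw [inter_imGT_eq_empty (add_nsmul_add_negI_subset_imLE h (m + 1)) (by push_cast; linarith)]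
      exact empty_subset _

end Leading

lemma forall_of_nonneg_of_add_step {P : ℝ → Prop} {c : ℝ} (hc : 0 < c)
    (hbase : ∀ s, 0 ≤ s → P s) (hstep : ∀ s, P (s + c) → P s) (s : ℝ) : P s := by
  have key (n : ℕ) : ∀ s, -(n * c) ≤ s → P s := by
    induction n with
    | zero => simpa using hbase
    | succ n ih => exact fun s hs => hstep s (ih _ (by push_cast at hs; linarith))
  obtain ⟨n, hn⟩ := exists_nat_gt (-s / c)
  exact key n s (by rw [div_lt_iff₀ hc] at hn; linarith)

lemma finite_closure_sep_im_gt {G : Set ℂ} {c : ℝ} (hc : 0 < c) (hG : ∀ z ∈ G, z.im ≤ -c)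
    (hGfin : ∀ s, {z ∈ G | s < z.im}.Finite) (s : ℝ) :
    {z ∈ (AddSubmonoid.closure G : Set ℂ) | s < z.im}.Finite := by
  set M := AddSubmonoid.closure G
  have him (z : ℂ) (hz : z ∈ M) : z.im ≤ 0 := by
    induction hz using AddSubmonoid.closure_induction with
    | mem x hx => linarith [hG x hx]
    | zero => simp
    | add x y _ _ hx hy => simpa using add_nonpos hx hy
  have hdecomp (z : ℂ) (hz : z ∈ M) : z = 0 ∨ ∃ g ∈ G, ∃ w ∈ M, g + w = z := by
    induction hz using AddSubmonoid.closure_induction_left with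
    | zero => exact .inl rfl
    | add_left g hg w hw _ => exact .inr ⟨g, hg, w, hw, rfl⟩
  revert s
  refine forall_of_nonneg_of_add_step hc (fun s hs => ?_) fun s ih => ?_
  · refine finite_empty.subset fun z ⟨hz, hlt⟩ => ?_
    linarith [him z hz]
  -- for `z = g + w` above `s`, `Im g ≤ -c` puts `w` above `s + c` and `Im w ≤ 0` puts `g` above `s`
  · refine ((finite_singleton 0).union ((hGfin s).add ih)).subset ?_
    rintro z ⟨hz, hlt⟩
    rcases hdecomp z hz with rfl | ⟨g, hg, w, hw, rfl⟩
    · exact .inl rfl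
    · have := hG g hg
      have := him w hw
      simp only [add_im] at hlt
      exact .inr ⟨g, ⟨hg, by linarith⟩, w, ⟨hw, by linarith⟩, rfl⟩

section Exponents

variable {E₀ : Set (ℂ × ℕ)}

lemma scriRec_subset_fst_preimage {M : AddSubmonoid ℂ} (hE₀ : E₀ ⊆ Prod.fst ⁻¹' M)
    (hI : -I ∈ M) (k : ℕ) :
    (scriRec E₀ k).1 ⊆ Prod.fst ⁻¹' M ∧ (scriRec E₀ k).2.1 ⊆ Prod.fst ⁻¹' M ∧
      (scriRec E₀ k).2.2 ⊆ Prod.fst ⁻¹' M := by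
  set N := M.comap (AddMonoidHom.fst ℂ ℕ)
  change _ ⊆ (N : Set (ℂ × ℕ)) ∧ _ ⊆ (N : Set (ℂ × ℕ)) ∧ _ ⊆ (N : Set (ℂ × ℕ))
  have hnegI : {negI} ⊆ (N : Set (ℂ × ℕ)) := singleton_subset_iff.2 hI
  have hzero : idxZero ⊆ (N : Set (ℂ × ℕ)) := by
    rw [idxZero_eq_range]; rintro _ ⟨n, rfl⟩; exact N.nsmul_mem (hnegI rfl) n
  induction k with
  | zero => simp [scriRec_zero]
  | succ k ih =>
    obtain ⟨h', hbar, h⟩ := ih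
    rw [scriRec_succ_fst, scriRec_succ_snd_fst, scriRec_succ_snd_snd]
    have h2 : 2 • (scriRec E₀ k).2.2 + {negI} ⊆ (N : Set (ℂ × ℕ)) :=
      AddSubmonoid.add_subset (AddSubmonoid.nsmul_subset h) hnegI
    exact ⟨extUnion_subset_fst_preimage hE₀ h2,
      union_subset hzero (extUnion_subset_fst_preimage hE₀
        (union_subset (AddSubmonoid.add_subset hbar h') h2)),
      union_subset (extUnion_subset_fst_preimage hzero (extUnion_subset_fst_preimage hE₀
          (union_subset (AddSubmonoid.add_subset h h') (AddSubmonoid.nsmul_subset hbar))))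
        (iUnion_subset fun m => AddSubmonoid.add_subset h
          (AddSubmonoid.nsmul_subset (AddSubmonoid.add_subset h hnegI)))⟩

end Exponents

def sndLE (B : ℕ) : Set (ℂ × ℕ) := Prod.snd ⁻¹' Iic B

section LogPowers

variable {S T : Set (ℂ × ℕ)} {A B : ℕ} {s : ℝ}

lemma sndLE_mono (h : A ≤ B) : sndLE A ⊆ sndLE B := fun _ hp => le_trans hp h

lemma add_subset_sndLE (hS : S ⊆ sndLE A) (hT : T ⊆ sndLE B) : S + T ⊆ sndLE (A + B) := by
  rintro _ ⟨p, hp, q, hq, rfl⟩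
  exact Nat.add_le_add (hS hp) (hT hq)

lemma nsmul_subset_sndLE (hS : S ⊆ sndLE B) (n : ℕ) : n • S ⊆ sndLE (n * B) := by
  induction n with
  | zero => simp [sndLE]
  | succ n ih => simpa [succ_nsmul, add_mul] using add_subset_sndLE ih hS

lemma extUnion_subset_sndLE (hS : S ⊆ sndLE A) (hT : T ⊆ sndLE B) :
    extUnion S T ⊆ sndLE (A + B + 1) := by
  intro p hp
  rcases mem_extUnion.1 hp with h | h | ⟨j₁, j₂, h₁, h₂, hj⟩
  · exact le_trans (show p.2 ≤ A from hS h) (by omega)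
  · exact le_trans (show p.2 ≤ B from hT h) (by omega)
  · have : j₁ ≤ A := hS h₁
    have : j₂ ≤ B := hT h₂
    exact le_trans hj (by omega)

lemma idxZero_subset_sndLE : idxZero ⊆ sndLE 0 := by
  rw [idxZero_eq_range]; rintro _ ⟨n, rfl⟩; simp [sndLE, negI]

lemma nsmul_add_negI_inter_imGT_subset_sndLE (hS : S ⊆ imLE 0)
    (hB : S ∩ imGT (s + 1) ⊆ sndLE B) (n : ℕ) : (n • S + {negI}) ∩ imGT s ⊆ sndLE (n * B) :=
  calc (n • S + {negI}) ∩ imGT s ⊆ (n • S ∩ imGT (s + 1)) + {negI} := add_negI_inter_imGT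
    _ ⊆ n • (S ∩ imGT (s + 1)) + {negI} := add_subset_add_right (nsmul_inter_imGT_subset hS n)
    _ ⊆ sndLE (n * B + 0) :=
      add_subset_sndLE (nsmul_subset_sndLE hB n) (by simp [sndLE, negI])
    _ = sndLE (n * B) := by rw [add_zero]

lemma add_nsmul_add_negI_inter_imGT_subset_sndLE (hS : S ⊆ imLE 0)
    (hB : S ∩ imGT (s + 1) ⊆ sndLE B) (m : ℕ) :
    (S + (m + 1) • (S + {negI})) ∩ imGT s ⊆ sndLE (B + (m + 1) * B) := by
  have hX : S + {negI} ⊆ imLE (-1) :=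
    (add_subset_imLE hS singleton_negI_subset_imLE).trans (imLE_mono (by norm_num))
  have hXB : (S + {negI}) ∩ imGT s ⊆ sndLE B := by
    have := nsmul_add_negI_inter_imGT_subset_sndLE hS hB 1
    rwa [one_nsmul, one_mul] at this
  calc (S + (m + 1) • (S + {negI})) ∩ imGT s
      ⊆ (S ∩ imGT (s - ((m + 1 : ℕ) : ℝ) * (-1))) + ((m + 1) • (S + {negI}) ∩ imGT (s - 0)) :=
        add_inter_imGT_subset hS (nsmul_subset_imLE hX (m + 1))
    _ ⊆ (S ∩ imGT (s + 1)) + (m + 1) • ((S + {negI}) ∩ imGT s) := by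
        refine add_subset_add (inter_subset_inter_right _ (imGT_anti ?_)) ?_
        · push_cast; linarith
        · rw [sub_zero]
          exact nsmul_inter_imGT_subset (hX.trans (imLE_mono (by norm_num))) (m + 1)
    _ ⊆ sndLE (B + (m + 1) * B) := add_subset_sndLE hB (nsmul_subset_sndLE hXB _)

end LogPowers

section UniformBounds

variable {E₀ : Set (ℂ × ℕ)} {c s : ℝ} {B J b' b : ℕ}

lemma scriRec_fst_inter_imGT_subset_sndLE (hc : 0 ≤ c) (hc1 : c ≤ 1) (hE₀ : E₀ ⊆ imLE (-c))
    (hJ : E₀ ∩ imGT s ⊆ sndLE J) (hB : ∀ k, (scriRec E₀ k).2.2 ∩ imGT (s + c) ⊆ sndLE B)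
    (k : ℕ) : (scriRec E₀ k).1 ∩ imGT s ⊆ sndLE (J + 2 * B + 1) := by
  cases k with
  | zero => simp [scriRec_zero]
  | succ k =>
    have hB1 : (scriRec E₀ k).2.2 ∩ imGT (s + 1) ⊆ sndLE B :=
      (inter_subset_inter_right _ (imGT_anti (by linarith))).trans (hB k)
    rw [scriRec_succ_fst, extUnion_inter_imGT]
    exact extUnion_subset_sndLE hJ
      (nsmul_add_negI_inter_imGT_subset_sndLE (scriRec_subset_imLE hc hc1 hE₀ k).2.2 hB1 2)

lemma scriRec_snd_fst_inter_imGT_subset_sndLE (hc : 0 ≤ c) (hc1 : c ≤ 1)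
    (hE₀ : E₀ ⊆ imLE (-c)) (hJ : E₀ ∩ imGT s ⊆ sndLE J)
    (h' : ∀ k, (scriRec E₀ k).1 ∩ imGT s ⊆ sndLE b')
    (hB : ∀ k, (scriRec E₀ k).2.1 ∩ imGT (s + c) ⊆ sndLE B ∧
      (scriRec E₀ k).2.2 ∩ imGT (s + c) ⊆ sndLE B)
    (k : ℕ) : (scriRec E₀ k).2.1 ∩ imGT s ⊆ sndLE (J + (3 * B + b') + 1) := by
  cases k with
  | zero => simp [scriRec_zero]
  | succ k =>
    obtain ⟨hfst, hbar, h⟩ := scriRec_subset_imLE hc hc1 hE₀ k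
    have hB1 : (scriRec E₀ k).2.2 ∩ imGT (s + 1) ⊆ sndLE B :=
      (inter_subset_inter_right _ (imGT_anti (by linarith))).trans (hB k).2
    have hsum : ((scriRec E₀ k).2.1 + (scriRec E₀ k).1) ∩ imGT s ⊆ sndLE (B + b') :=
      (add_inter_imGT_subset hbar hfst).trans
        (add_subset_sndLE (by simpa using (hB k).1) (by simpa using h' k))
    rw [scriRec_succ_snd_fst, union_inter_distrib_right, extUnion_inter_imGT,
      union_inter_distrib_right]
    refine union_subset
      ((inter_subset_left.trans idxZero_subset_sndLE).trans (sndLE_mono (by omega)))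
      (extUnion_subset_sndLE hJ (union_subset (hsum.trans (sndLE_mono (by omega))) ?_))
    exact (nsmul_add_negI_inter_imGT_subset_sndLE h hB1 2).trans (sndLE_mono (by omega))

lemma scriRec_snd_snd_inter_imGT_subset_sndLE (hc : 0 ≤ c) (hc1 : c ≤ 1)
    (hE₀ : E₀ ⊆ imLE (-c)) (hJ : E₀ ∩ imGT s ⊆ sndLE J)
    (h' : ∀ k, (scriRec E₀ k).1 ∩ imGT s ⊆ sndLE b')
    (hbar : ∀ k, (scriRec E₀ k).2.1 ∩ imGT s ⊆ sndLE b)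
    (hB : ∀ k, (scriRec E₀ k).2.2 ∩ imGT (s + c) ⊆ sndLE B) (k : ℕ) :
    (scriRec E₀ k).2.2 ∩ imGT s ⊆ sndLE (J + (B + b' + 2 * b) + 2 + (B + ⌈-s⌉₊ * B)) := by
  induction k with
  | zero => simp [scriRec_zero]
  | succ k ih =>
    obtain ⟨hfst, hsnd, h⟩ := scriRec_subset_imLE hc hc1 hE₀ k
    have hB1 : (scriRec E₀ k).2.2 ∩ imGT (s + 1) ⊆ sndLE B :=
      (inter_subset_inter_right _ (imGT_anti (by linarith))).trans (hB k)
    have hsum : ((scriRec E₀ k).2.2 + (scriRec E₀ k).1) ∩ imGT s ⊆ sndLE (B + b') :=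
      (add_inter_imGT_subset h hfst).trans
        (add_subset_sndLE (by simpa using hB k) (by simpa using h' k))
    have htwo : (2 • (scriRec E₀ k).2.1) ∩ imGT s ⊆ sndLE (2 * b) :=
      (nsmul_inter_imGT_subset hsnd 2).trans (nsmul_subset_sndLE (hbar k) 2)
    rw [scriRec_succ_snd_snd, union_inter_distrib_right, extUnion_inter_imGT, extUnion_inter_imGT,
      union_inter_distrib_right, iUnion_inter]
    refine union_subset ((extUnion_subset_sndLE (inter_subset_left.trans idxZero_subset_sndLE)
      (extUnion_subset_sndLE hJ (union_subset (hsum.trans (sndLE_mono (B := B + b' + 2 * b)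
        (by omega))) (htwo.trans (sndLE_mono (by omega)))))).trans (sndLE_mono (by omega)))
      (iUnion_subset fun m => ?_)
    rcases m with _ | m
    · simpa using ih
    -- `E + (m + 1) • (E - i)` lies below `-(m + 1)`, so only `m + 1 ≤ ⌈-s⌉₊` reaches above `s`
    by_cases hm : m + 1 ≤ ⌈-s⌉₊
    · have := Nat.mul_le_mul_right B hm
      exact (add_nsmul_add_negI_inter_imGT_subset_sndLE h hB1 m).trans (sndLE_mono (by omega))
    · have : -s < m + 1 := (Nat.le_ceil (-s)).trans_lt (by exact_mod_cast not_le.1 hm)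
      rw [inter_imGT_eq_empty (add_nsmul_add_negI_subset_imLE h (m + 1)) (by push_cast; linarith)]
      exact empty_subset _

end UniformBounds

section Finiteness

variable {E₀ : Set (ℂ × ℕ)} {c : ℝ}

lemma exists_scriRec_inter_imGT_subset_sndLE (hc : 0 < c) (hc1 : c ≤ 1)
    (hE₀ : E₀ ⊆ imLE (-c)) (hfin : ∀ s, (E₀ ∩ imGT s).Finite) (s : ℝ) :
    ∃ B, ∀ k, (scriRec E₀ k).1 ∩ imGT s ⊆ sndLE B ∧ (scriRec E₀ k).2.1 ∩ imGT s ⊆ sndLE B ∧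
      (scriRec E₀ k).2.2 ∩ imGT s ⊆ sndLE B := by
  revert s
  refine forall_of_nonneg_of_add_step hc (fun s hs => ⟨0, fun k => ?_⟩) fun s ⟨B, hB⟩ => ?_
  · obtain ⟨h', hbar, h⟩ := scriRec_subset_imLE hc.le hc1 hE₀ k
    simp [inter_imGT_eq_empty h' (by linarith : -c ≤ s), inter_imGT_eq_empty hbar hs,
      inter_imGT_eq_empty h hs]
  · obtain ⟨J, hJ⟩ := ((hfin s).image Prod.snd).bddAbove
    have hJ' : E₀ ∩ imGT s ⊆ sndLE J := fun p hp => hJ (mem_image_of_mem _ hp)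
    have h' := scriRec_fst_inter_imGT_subset_sndLE hc.le hc1 hE₀ hJ' fun k => (hB k).2.2
    have hbar := scriRec_snd_fst_inter_imGT_subset_sndLE hc.le hc1 hE₀ hJ' h' fun k => (hB k).2
    have h := scriRec_snd_snd_inter_imGT_subset_sndLE hc.le hc1 hE₀ hJ' h' hbar fun k => (hB k).2.2
    exact ⟨_, fun k => ⟨(h' k).trans (sndLE_mono (Nat.le_add_right _ _)),
      (hbar k).trans (sndLE_mono (by omega)), (h k).trans (sndLE_mono (Nat.le_add_left _ _))⟩⟩

lemma finite_iUnion_inter_imGT {ι : Sort*} {S : ι → Set (ℂ × ℕ)} {M : Set ℂ} {s : ℝ} {B : ℕ}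
    (hM : {z ∈ M | s < z.im}.Finite) (hS : ∀ i, S i ⊆ Prod.fst ⁻¹' M)
    (hB : ∀ i, S i ∩ imGT s ⊆ sndLE B) : ((⋃ i, S i) ∩ imGT s).Finite := by
  refine (hM.prod (finite_Iic B)).subset fun p hp => ?_
  rw [iUnion_inter] at hp
  obtain ⟨i, hi⟩ := mem_iUnion.1 hp
  exact ⟨⟨hS i hi.1, hi.2⟩, hB i hi⟩

lemma scriRec_iUnion_inter_imGT_finite (hc : 0 < c) (hc1 : c ≤ 1) (hE₀ : E₀ ⊆ imLE (-c))
    (hfin : ∀ s, (E₀ ∩ imGT s).Finite) (s : ℝ) :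
    ((⋃ k, (scriRec E₀ k).1) ∩ imGT s).Finite ∧ ((⋃ k, (scriRec E₀ k).2.1) ∩ imGT s).Finite ∧
      ((⋃ k, (scriRec E₀ k).2.2) ∩ imGT s).Finite := by
  set G := insert (-I) (Prod.fst '' E₀)
  have hG : ∀ z ∈ G, z.im ≤ -c := by
    rintro z (rfl | ⟨_, hp, rfl⟩)
    · simpa using hc1
    · exact hE₀ hp
  have hGfin (s : ℝ) : {z ∈ G | s < z.im}.Finite := by
    refine ((hfin s).image Prod.fst).insert (-I) |>.subset ?_
    rintro z ⟨rfl | hz, hs⟩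
    · exact mem_insert _ _
    · obtain ⟨p, hp, rfl⟩ := hz
      exact mem_insert_of_mem _ ⟨p, ⟨hp, hs⟩, rfl⟩
  have hM := finite_closure_sep_im_gt hc hG hGfin s
  have hmem := scriRec_subset_fst_preimage (M := AddSubmonoid.closure G)
    (fun p hp => AddSubmonoid.subset_closure (mem_insert_of_mem _ ⟨p, hp, rfl⟩))
    (AddSubmonoid.subset_closure (mem_insert _ _))
  obtain ⟨B, hB⟩ := exists_scriRec_inter_imGT_subset_sndLE hc hc1 hE₀ hfin s
  exact ⟨finite_iUnion_inter_imGT hM (fun k => (hmem k).1) fun k => (hB k).1,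
    finite_iUnion_inter_imGT hM (fun k => (hmem k).2.1) fun k => (hB k).2.1,
    finite_iUnion_inter_imGT hM (fun k => (hmem k).2.2) fun k => (hB k).2.2⟩

end Finiteness

lemma isIndexSet_of {S : Set (ℂ × ℕ)} (hlog : LogClosed S) (hshift : ShiftClosed S)
    (hfin : ∀ s, (S ∩ imGT s).Finite) : IsIndexSet S :=
  ⟨hlog, fun C => hfin (-C), shiftClosed_iff.1 hshift⟩

/-- The unions `E'_I, Ē_I, E_I` of the recursively defined families are index sets (in
particular all the sets `{Im z > -N}` are finite), `Im E'_I ≤ -c`, all elements of `Ē_I` with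
`Im z > -c` equal `(0,0)`, and all elements of `E_I` with `Im z > -c` equal `(0,0)` or `(0,1)`,
where `c = min(1, c₀)`. -/
theorem scri_index_sets (E₀ : Set (ℂ × ℕ)) (hE₀ : IsIndexSet E₀)
    (c₀ : ℝ) (hc₀ : 0 < c₀) (hE₀im : ∀ z : ℂ, ∀ j : ℕ, (z, j) ∈ E₀ → z.im ≤ -c₀) :
    IsIndexSet (⋃ k, (scriRec E₀ k).1) ∧
    IsIndexSet (⋃ k, (scriRec E₀ k).2.1) ∧
    IsIndexSet (⋃ k, (scriRec E₀ k).2.2) ∧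
    (∀ N : ℝ, {p : ℂ × ℕ | p ∈ (⋃ k, (scriRec E₀ k).1) ∧ -N < p.1.im}.Finite) ∧
    (∀ N : ℝ, {p : ℂ × ℕ | p ∈ (⋃ k, (scriRec E₀ k).2.1) ∧ -N < p.1.im}.Finite) ∧
    (∀ N : ℝ, {p : ℂ × ℕ | p ∈ (⋃ k, (scriRec E₀ k).2.2) ∧ -N < p.1.im}.Finite) ∧
    (∀ z : ℂ, ∀ j : ℕ, (z, j) ∈ (⋃ k, (scriRec E₀ k).1) → z.im ≤ -min 1 c₀) ∧
    (∀ z : ℂ, ∀ j : ℕ, (z, j) ∈ (⋃ k, (scriRec E₀ k).2.1) → -min 1 c₀ < z.im →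
      (z, j) = ((0 : ℂ), (0 : ℕ))) ∧
    (∀ z : ℂ, ∀ j : ℕ, (z, j) ∈ (⋃ k, (scriRec E₀ k).2.2) → -min 1 c₀ < z.im →
      (z, j) = ((0 : ℂ), (0 : ℕ)) ∨ (z, j) = ((0 : ℂ), (1 : ℕ))) := by
  obtain ⟨hlog₀, hfin₀, hshift₀⟩ := hE₀
  set c := min 1 c₀
  have hc : 0 < c := lt_min one_pos hc₀
  have hc1 : c ≤ 1 := min_le_left 1 c₀
  have hE₀c : E₀ ⊆ imLE (-c) := fun p hp =>
    (hE₀im p.1 p.2 hp).trans (neg_le_neg (min_le_right 1 c₀))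
  have hfin := scriRec_iUnion_inter_imGT_finite hc hc1 hE₀c fun s => by
    have := hfin₀ (-s); rwa [neg_neg] at this
  have hlog := scriRec_logClosed hlog₀
  have hshift := scriRec_shiftClosed (shiftClosed_iff.2 hshift₀)
  refine ⟨isIndexSet_of (.iUnion fun k => (hlog k).1) (.iUnion fun k => (hshift k).1)
      fun s => (hfin s).1,
    isIndexSet_of (.iUnion fun k => (hlog k).2.1) (.iUnion fun k => (hshift k).2.1)
      fun s => (hfin s).2.1,
    isIndexSet_of (.iUnion fun k => (hlog k).2.2) (.iUnion fun k => (hshift k).2.2)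
      fun s => (hfin s).2.2,
    fun N => (hfin (-N)).1, fun N => (hfin (-N)).2.1, fun N => (hfin (-N)).2.2,
    fun z j h => iUnion_subset (fun k => (scriRec_subset_imLE hc.le hc1 hE₀c k).1) h, ?_, ?_⟩
  · intro z j h hz
    obtain ⟨k, hk⟩ := mem_iUnion.1 h
    exact scriRec_snd_fst_inter_imGT_subset hc.le hc1 hE₀c k ⟨hk, hz⟩
  · intro z j h hz
    obtain ⟨k, hk⟩ := mem_iUnion.1 h
    exact scriRec_snd_snd_inter_imGT_subset hc.le hc1 hE₀c k ⟨hk, hz⟩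
end

section
/- Let m ∈ ℝ, Λ ≥ 0, and let χ̃ : ℝ → [0,1] be Lipschitz continuous with Lipschitz constant Λ. Then there exists ρ₀ ∈ (0,1) with 2|m|ρ₀ < 1 such that for every ρ ∈ (0, ρ₀] and every v ∈ ℝ there is exactly one f ∈ ℝ satisfying the equation f = 1 + v − 2mρ·χ̃(f)·(log ρ − log(1 − 2mρ)); moreover this unique solution satisfies |f − (1+v)| ≤ 2|m|·ρ·|log ρ − log(1 − 2mρ)|. -/
/-!
For `0 < ρ ≤ ρ₀` the right-hand side `F f = 1 + v - 2mρ χ(f) (log ρ - log(1 - 2mρ))` is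
Lipschitz in `f` with constant `2|m| Λ · ρ |log ρ - log(1 - 2mρ)|`, and this tends to `0` as
`ρ → 0⁺` because `ρ log ρ → 0`. Hence for small `ρ` the map `F` is a contraction of `ℝ` and
Banach's fixed point theorem gives the unique solution. The bound on `f - (1 + v)` is read
off the equation using `|χ f| ≤ 1`.
-/

open Real Filter Topology

open scoped NNReal

theorem ContractingWith.existsUnique_eq_apply {α : Type*} [MetricSpace α] [CompleteSpace α]
    [Nonempty α] {K : ℝ≥0} {F : α → α} (hF : ContractingWith K F) : ∃! x, x = F x :=
  ⟨hF.fixedPoint F, hF.fixedPoint_isFixedPt.symm, fun _ hx => hF.fixedPoint_unique hx.symm⟩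

theorem LipschitzWith.sub_mul_mul {χ : ℝ → ℝ} {K : ℝ≥0} (hχ : LipschitzWith K χ) (c a b : ℝ) :
    LipschitzWith (‖a‖₊ * K * ‖b‖₊) fun x => c - a * χ x * b := by
  refine LipschitzWith.of_dist_le_mul fun x y => ?_
  have hdist : dist (c - a * χ x * b) (c - a * χ y * b) = |a| * |b| * dist (χ x) (χ y) := by
    rw [Real.dist_eq, Real.dist_eq, ← abs_mul, ← abs_mul, ← abs_neg]
    ring_nf
  rw [hdist]
  push_cast
  calc |a| * |b| * dist (χ x) (χ y) ≤ |a| * |b| * (K * dist x y) := by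
        gcongr
        exact hχ.dist_le_mul x y
    _ = |a| * K * |b| * dist x y := by ring

theorem existsUnique_eq_sub_mul_mul {χ : ℝ → ℝ} {K : ℝ≥0} (hχ : LipschitzWith K χ)
    (c a b : ℝ) (hsmall : |a| * K * |b| < 1) : ∃! f, f = c - a * χ f * b :=
  ContractingWith.existsUnique_eq_apply ⟨mod_cast hsmall, hχ.sub_mul_mul c a b⟩

theorem abs_sub_le_of_eq_sub_mul_mul {f c a t b : ℝ} (hf : f = c - a * t * b) (ht : |t| ≤ 1) :
    |f - c| ≤ |a| * |b| := by
  calc |f - c| = |a| * |t| * |b| := by rw [hf, ← abs_mul, ← abs_mul, ← abs_neg]; ring_nf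
    _ ≤ |a| * 1 * |b| := by gcongr
    _ = |a| * |b| := by ring

theorem tendsto_mul_log_sub_log_one_sub (c : ℝ) :
    Tendsto (fun ρ => ρ * (log ρ - log (1 - c * ρ))) (𝓝 0) (𝓝 0) := by
  -- with `log 0 = 0`, `x * log x` is continuous at `0`, so the limit is the value at `0`
  have hcont : ContinuousAt (fun ρ => ρ * log ρ - ρ * log (1 - c * ρ)) 0 :=
    continuous_mul_log.continuousAt.sub <|
      continuousAt_id.mul <| (continuousAt_log (by norm_num)).comp (by fun_prop)
  simpa [mul_sub] using hcont.tendsto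

theorem compactification_fixed_point_general (m Λ : ℝ) (χ : ℝ → ℝ)
    (hrange : ∀ a : ℝ, χ a ∈ Set.Icc (0 : ℝ) 1)
    (hlip : ∀ a b : ℝ, |χ a - χ b| ≤ Λ * |a - b|) :
    ∃ ρ₀ : ℝ, ρ₀ ∈ Set.Ioo (0 : ℝ) 1 ∧ 2 * |m| * ρ₀ < 1 ∧
      ∀ ρ ∈ Set.Ioc (0 : ℝ) ρ₀, ∀ v : ℝ,
        (∃! f : ℝ,
          f = 1 + v - 2 * m * ρ * χ f * (Real.log ρ - Real.log (1 - 2 * m * ρ))) ∧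
        ∀ f : ℝ,
          f = 1 + v - 2 * m * ρ * χ f * (Real.log ρ - Real.log (1 - 2 * m * ρ)) →
            |f - (1 + v)| ≤ 2 * |m| * ρ * |Real.log ρ - Real.log (1 - 2 * m * ρ)| := by
  have hχ : LipschitzWith Λ.toNNReal χ :=
    .of_dist_le' fun a b => by simpa only [Real.dist_eq] using hlip a b
  set L : ℝ → ℝ := fun ρ => log ρ - log (1 - 2 * m * ρ)
  have hcontr : ∀ᶠ ρ in 𝓝 0, |2 * m| * Λ.toNNReal * |ρ * L ρ| < 1 := by
    refine ((tendsto_mul_log_sub_log_one_sub (2 * m)).abs.const_mul _).eventually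
      (gt_mem_nhds ?_)
    simp
  have hsmall : ∀ᶠ ρ in 𝓝[>] 0, ρ < 1 ∧ 2 * |m| * ρ < 1 ∧
      |2 * m * ρ| * Λ.toNNReal * |L ρ| < 1 := by
    filter_upwards [self_mem_nhdsWithin, nhdsWithin_le_nhds (gt_mem_nhds zero_lt_one),
      nhdsWithin_le_nhds (((by fun_prop : Continuous fun ρ : ℝ => 2 * |m| * ρ).tendsto' 0 0
        (by simp)).eventually (gt_mem_nhds zero_lt_one)), nhdsWithin_le_nhds hcontr]
      with ρ hρ hρ1 hmρ hK
    refine ⟨hρ1, hmρ, ?_⟩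
    convert hK using 1
    rw [abs_mul, abs_mul ρ]
    ring
  obtain ⟨ρ₀, hρ₀, hsub⟩ := mem_nhdsGT_iff_exists_Ioc_subset.mp hsmall
  obtain ⟨hρ₀1, hmρ₀, -⟩ := hsub ⟨hρ₀, le_rfl⟩
  refine ⟨ρ₀, ⟨hρ₀, hρ₀1⟩, hmρ₀, fun ρ hρ v => ⟨?_, fun f hf => ?_⟩⟩
  · exact existsUnique_eq_sub_mul_mul hχ _ _ _ (hsub hρ).2.2
  · have hχf : |χ f| ≤ 1 := abs_le.mpr ⟨by linarith [(hrange f).1], (hrange f).2⟩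
    calc |f - (1 + v)| ≤ |2 * m * ρ| * |L ρ| := abs_sub_le_of_eq_sub_mul_mul hf hχf
      _ = 2 * |m| * ρ * |L ρ| := by rw [abs_mul, abs_mul, abs_two, abs_of_pos hρ.1]

/-- Unique solvability of the functional equation
`f = 1 + v - 2mρ χ(f) (log ρ - log(1 - 2mρ))` for small `ρ`, where `χ : ℝ → [0,1]` is
Lipschitz with constant `Λ`; the unique solution satisfies
`|f - (1+v)| ≤ 2|m| ρ |log ρ - log(1 - 2mρ)|`. -/
theorem compactification_fixed_point (m Λ : ℝ) (hΛ : 0 ≤ Λ) (χ : ℝ → ℝ)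
    (hrange : ∀ a : ℝ, χ a ∈ Set.Icc (0 : ℝ) 1)
    (hlip : ∀ a b : ℝ, |χ a - χ b| ≤ Λ * |a - b|) :
    ∃ ρ₀ : ℝ, ρ₀ ∈ Set.Ioo (0 : ℝ) 1 ∧ 2 * |m| * ρ₀ < 1 ∧
      ∀ ρ ∈ Set.Ioc (0 : ℝ) ρ₀, ∀ v : ℝ,
        (∃! f : ℝ,
          f = 1 + v - 2 * m * ρ * χ f * (Real.log ρ - Real.log (1 - 2 * m * ρ))) ∧
        ∀ f : ℝ,
          f = 1 + v - 2 * m * ρ * χ f * (Real.log ρ - Real.log (1 - 2 * m * ρ)) →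
            |f - (1 + v)| ≤ 2 * |m| * ρ * |Real.log ρ - Real.log (1 - 2 * m * ρ)| :=
  compactification_fixed_point_general m Λ χ hrange hlip
end
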